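/- arXiv:2311.16736 — 8 statements merged into one kernel-verified Lean document; each statement's English description precedes it below -/
import Mathlib

section
/- The adapted coordinate straightens the self-similar vector field: let μ > 0, let a : (0,∞) × ℝ → ℝ be differentiable with ∂_φ a(β,φ) − ∂_β a(β,φ) ≠ 0 for all (β,φ), and define T(β,φ) = e^{a(β,φ)}(cos(β+φ), sin(β+φ)). Let ψ̃ : ℝ²∖{0} → ℝ be differentiable and set ψ(β,φ) = ψ̃(T(β,φ)). If ∂_β ψ(β,φ) = −μ·e^{2a(β,φ)} for all (β,φ) (equivalently a = (1/2)·log(−∂_βψ/μ)), then for every (β,φ) the vector ∇^⊥ψ̃(T(β,φ)) − μ·T(β,φ) is a scalar multiple of ∂_β T(β,φ); consequently the pullback under T of any integral curve of ∇^⊥ψ̃ − μz contained in the range of T has constant φ-component. -/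
open Set

noncomputable section

/-- Perpendicular gradient `∇^⊥ f = (−∂₂ f, ∂₁ f)`. -/
def gradPerp (f : ℂ → ℝ) (x : ℂ) : ℂ := ⟨-(fderiv ℝ f x Complex.I), fderiv ℝ f x 1⟩

/-!
Write `v = ∂_β T = (∂_β a + i) T` and measure parallelism with the cross product
`v × u = Im (conj v * u)`. Since `∇^⊥ψ̃` is `∇ψ̃` rotated by `i`, `v × ∇^⊥ψ̃ = ⟨∇ψ̃, v⟩ = ∂_β ψ`,
while `v × μT = -μ |T|² = -μ e^{2a}`. So the hypothesis `∂_β ψ = -μ e^{2a}` says precisely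
that `∇^⊥ψ̃(T) - μT` and `∂_β T` are parallel.
-/

open Complex (I normSq)
open ComplexConjugate

theorem Complex.exists_real_smul_eq_of_im_conj_mul_eq_zero {u v : ℂ} (hv : v ≠ 0)
    (h : (conj v * u).im = 0) : ∃ c : ℝ, u = c • v := by
  refine ⟨(conj v * u).re / normSq v, ?_⟩
  have hreal : conj v * u = ((conj v * u).re : ℂ) := Complex.ext rfl (by simp [h])
  have hconj : conj v ≠ 0 := (map_ne_zero _).2 hv
  rw [Complex.real_smul, Complex.ofReal_div, ← hreal, Complex.normSq_eq_conj_mul_self]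
  field_simp

theorem im_conj_mul_gradPerp (f : ℂ → ℝ) (x v : ℂ) :
    (conj v * gradPerp f x).im = fderiv ℝ f x v := by
  have hv : v = v.re • (1 : ℂ) + v.im • I := by
    simp [Complex.real_smul, Complex.re_add_im]
  conv_rhs => rw [hv, map_add, map_smul, map_smul, smul_eq_mul, smul_eq_mul]
  simp only [gradPerp, Complex.mul_im, Complex.conj_re, Complex.conj_im]
  ring

theorem im_conj_mul_add_I_mul_self (r : ℝ) (z : ℂ) :
    (conj (((r : ℂ) + I) * z) * z).im = -normSq z := by
  simp only [map_mul, mul_assoc, ← Complex.normSq_eq_conj_mul_self, map_add,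
    Complex.conj_ofReal, Complex.conj_I, Complex.im_mul_ofReal]
  simp

theorem hasDerivAt_ofReal_exp_mul_cexp_mul_I {ρ θ : ℝ → ℝ} {ρ' θ' x : ℝ}
    (hρ : HasDerivAt ρ ρ' x) (hθ : HasDerivAt θ θ' x) :
    HasDerivAt (fun t => (Real.exp (ρ t) : ℂ) * Complex.exp ((θ t : ℂ) * I))
      ((ρ' + θ' * I) * ((Real.exp (ρ x) : ℂ) * Complex.exp ((θ x : ℂ) * I))) x := by
  have h : HasDerivAt (fun t => (Real.exp (ρ t) : ℂ) * Complex.exp ((θ t : ℂ) * I)) _ x :=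
    hρ.exp.ofReal_comp.mul (hθ.ofReal_comp.mul_const I).cexp
  convert h using 1
  push_cast
  ring

theorem normSq_ofReal_exp_mul_cexp_mul_I (r θ : ℝ) :
    normSq ((Real.exp r : ℂ) * Complex.exp ((θ : ℂ) * I)) = Real.exp (2 * r) := by
  rw [Complex.normSq_mul, Complex.normSq_ofReal, ← Complex.sq_norm, Complex.norm_exp_ofReal_mul_I,
    ← Real.exp_add, one_pow, mul_one, two_mul]

theorem stmt5_general (μ : ℝ) (a : ℝ → ℝ → ℝ)
    (hadiff : ∀ β : ℝ, 0 < β → ∀ φ : ℝ,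
      DifferentiableAt ℝ (fun p : ℝ × ℝ => a p.1 p.2) (β, φ))
    (ψtil : ℂ → ℝ)
    (hψ : ∀ z : ℂ, z ≠ 0 → DifferentiableAt ℝ ψtil z) :
    let T : ℝ → ℝ → ℂ := fun β φ =>
      (Real.exp (a β φ) : ℂ) * Complex.exp (((β + φ : ℝ) : ℂ) * Complex.I)
    (∀ β : ℝ, 0 < β → ∀ φ : ℝ,
      deriv (fun b => ψtil (T b φ)) β = -μ * Real.exp (2 * a β φ)) →
    ∀ β : ℝ, 0 < β → ∀ φ : ℝ, ∃ c : ℝ,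
      gradPerp ψtil (T β φ) - μ • T β φ = c • deriv (fun b => T b φ) β := by
  intro T hψβ β hβ φ
  set aβ := fderiv ℝ (fun p : ℝ × ℝ => a p.1 p.2) (β, φ) (1, 0)
  have ha : HasDerivAt (fun b => a b φ) aβ β :=
    (hadiff β hβ φ).hasFDerivAt.comp_hasDerivAt (f := fun b => (b, φ)) β
      ((hasDerivAt_id' β).prodMk (hasDerivAt_const β φ))
  have hT : HasDerivAt (fun b => T b φ) ((aβ + I) * T β φ) β := by
    simpa only [Complex.ofReal_one, one_mul] using
      hasDerivAt_ofReal_exp_mul_cexp_mul_I ha ((hasDerivAt_id' β).add_const φ)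
  have hT0 : T β φ ≠ 0 :=
    mul_ne_zero (Complex.ofReal_ne_zero.2 (Real.exp_pos _).ne') (Complex.exp_ne_zero _)
  have hv0 : (aβ + I) * T β φ ≠ 0 :=
    mul_ne_zero (fun h => by simpa using congrArg Complex.im h) hT0
  have hchain := ((hψ _ hT0).hasFDerivAt.comp_hasDerivAt β hT).deriv
  have hcross : (conj ((aβ + I) * T β φ) * (μ • T β φ)).im = -μ * Real.exp (2 * a β φ) := by
    rw [Complex.real_smul, mul_left_comm, Complex.im_ofReal_mul, im_conj_mul_add_I_mul_self,
      normSq_ofReal_exp_mul_cexp_mul_I]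
    ring
  rw [hT.deriv]
  refine Complex.exists_real_smul_eq_of_im_conj_mul_eq_zero hv0 ?_
  rw [mul_sub, Complex.sub_im, im_conj_mul_gradPerp, hcross, ← hchain, Function.comp_def,
    hψβ β hβ φ, sub_self]

/-- **The adapted coordinate straightens the self-similar vector field.**
Let `T(β,φ) = e^{a(β,φ)} (cos(β+φ), sin(β+φ))` with `a` differentiable and
`∂_φ a − ∂_β a ≠ 0`. If `ψ(β,φ) = ψ̃(T(β,φ))` satisfies `∂_β ψ = −μ e^{2a}`
(equivalently `a = (1/2) log(−∂_βψ/μ)`), then at every `(β,φ)` the vector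
`∇^⊥ψ̃(T(β,φ)) − μ T(β,φ)` is a scalar multiple of `∂_β T(β,φ)`. -/
theorem stmt5 (μ : ℝ) (hμ : 0 < μ) (a : ℝ → ℝ → ℝ)
    (hadiff : ∀ β : ℝ, 0 < β → ∀ φ : ℝ,
      DifferentiableAt ℝ (fun p : ℝ × ℝ => a p.1 p.2) (β, φ))
    (haφβ : ∀ β : ℝ, 0 < β → ∀ φ : ℝ,
      fderiv ℝ (fun p : ℝ × ℝ => a p.1 p.2) (β, φ) (0, 1) -
        fderiv ℝ (fun p : ℝ × ℝ => a p.1 p.2) (β, φ) (1, 0) ≠ 0)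
    (ψtil : ℂ → ℝ)
    (hψ : ∀ z : ℂ, z ≠ 0 → DifferentiableAt ℝ ψtil z) :
    let T : ℝ → ℝ → ℂ := fun β φ =>
      (Real.exp (a β φ) : ℂ) * Complex.exp (((β + φ : ℝ) : ℂ) * Complex.I)
    (∀ β : ℝ, 0 < β → ∀ φ : ℝ,
      deriv (fun b => ψtil (T b φ)) β = -μ * Real.exp (2 * a β φ)) →
    ∀ β : ℝ, 0 < β → ∀ φ : ℝ, ∃ c : ℝ,
      gradPerp ψtil (T β φ) - μ • T β φ = c • deriv (fun b => T b φ) β :=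
  stmt5_general μ a hadiff ψtil hψ
end
end

section
/- Separated form of the vorticity in adapted coordinates: let μ > 0, let a : (0,∞) × ℝ → ℝ be C², define T(β,φ) = e^{a(β,φ)}(cos(β+φ), sin(β+φ)), and assume ∂_φa − ∂_βa ≠ 0 everywhere. Let ψ̃ : ℝ²∖{0} → ℝ be C² and w̃ : ℝ²∖{0} → ℝ be C¹, and set ψ(β,φ) = ψ̃(T(β,φ)) and w(β,φ) = w̃(T(β,φ)). Assume: ∂_βψ(β,φ) = −μ·e^{2a(β,φ)} for all (β,φ); ∂_φψ(β,φ) − ∂_βψ(β,φ) > 0 for all (β,φ); and −w̃(z) + (∇^⊥ψ̃(z) − μz)·∇w̃(z) = 0 for all z in the range of T. Then the function (β,φ) ↦ (∂_φψ(β,φ) − ∂_βψ(β,φ))^{1/(2μ)} · w(β,φ) is independent of β; equivalently, there exists Ω : ℝ → ℝ such that w(β,φ) = (∂_φψ(β,φ) − ∂_βψ(β,φ))^{−1/(2μ)} · Ω(φ) for all (β,φ) ∈ (0,∞) × ℝ. -/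
/-!
Along each line `φ = const` the reduced Euler equation is a transport equation in `β`.
Since `∂_βT = (∂_βa + i) T`, the hypothesis `∂_βψ = Dψ̃(T) ∂_βT = -μ |T|²` forces `∇^⊥ψ̃ - μT` to be
parallel to `∂_βT`, and the equation becomes `G ∂_β w = (∂_φa - ∂_βa) e^{2a} w` with
`G = ∂_φψ - ∂_βψ`. By symmetry of second derivatives
`∂_β G = (∂_φ - ∂_β)(-μ e^{2a}) = -2μ (∂_φa - ∂_βa) e^{2a}`, so `∂_β (G^{1/(2μ)} w) = 0`
on the half-line `β > 0`.
-/

open Set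

noncomputable section

/-- Real dot product on ℝ² realized as ℂ. -/
def dotR (a b : ℂ) : ℝ := a.re * b.re + a.im * b.im

/-- Gradient of a scalar function on ℝ² ≅ ℂ. -/
def grad2 (f : ℂ → ℝ) (x : ℂ) : ℂ := ⟨fderiv ℝ f x 1, fderiv ℝ f x Complex.I⟩

open Filter Topology

section Slices

variable {F : Type*} [NormedAddCommGroup F] [NormedSpace ℝ F] {f : ℝ × ℝ → F} {x y : ℝ}

lemma HasFDerivAt.hasDerivAt_slice_fst {f' : ℝ × ℝ →L[ℝ] F} (hf : HasFDerivAt f f' (x, y)) :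
    HasDerivAt (fun t => f (t, y)) (f' (1, 0)) x :=
  hf.comp_hasDerivAt x ((hasDerivAt_id x).prodMk (hasDerivAt_const x y))

lemma HasFDerivAt.hasDerivAt_slice_snd {f' : ℝ × ℝ →L[ℝ] F} (hf : HasFDerivAt f f' (x, y)) :
    HasDerivAt (fun t => f (x, t)) (f' (0, 1)) y :=
  hf.comp_hasDerivAt y ((hasDerivAt_const y x).prodMk (hasDerivAt_id y))

lemma ContDiffAt.hasDerivAt_fderiv_apply_slice_fst {g : ℝ × ℝ → F} {g' : ℝ × ℝ →L[ℝ] F}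
    (hf : ContDiffAt ℝ 2 f (x, y)) (hg : HasFDerivAt g g' (x, y))
    (hfg : (fun q => fderiv ℝ f q (1, 0)) =ᶠ[𝓝 (x, y)] g) (v : ℝ × ℝ) :
    HasDerivAt (fun t => fderiv ℝ f (t, y) v) (g' v) x := by
  set D := fderiv ℝ (fderiv ℝ f) (x, y)
  have hD : HasFDerivAt (fderiv ℝ f) D (x, y) :=
    ((hf.fderiv_right le_rfl).differentiableAt one_ne_zero).hasFDerivAt
  have happly (u : ℝ × ℝ) :
      HasFDerivAt (fun q => fderiv ℝ f q u) ((ContinuousLinearMap.apply ℝ F u).comp D) (x, y) :=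
    (ContinuousLinearMap.apply ℝ F u).hasFDerivAt.comp (x, y) hD
  have hDg : (ContinuousLinearMap.apply ℝ F (1, 0)).comp D = g' :=
    (happly (1, 0)).unique (hg.congr_of_eventuallyEq hfg)
  have hsymm := hf.isSymmSndFDerivAt (by simp [minSmoothness_of_isRCLikeNormedField])
  convert (happly v).hasDerivAt_slice_fst using 1
  rw [← hDg]
  exact hsymm v (1, 0)

lemma hasDerivAt_deriv_slice_snd_sub_deriv_slice_fst {h : ℝ × ℝ → F} {h' : ℝ × ℝ →L[ℝ] F}
    (hf : ContDiffAt ℝ 2 f (x, y)) (hh : HasFDerivAt h h' (x, y))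
    (hfh : ∀ᶠ q in 𝓝 (x, y), deriv (fun t => f (t, q.2)) q.1 = h q) :
    HasDerivAt (fun t => deriv (fun u => f (t, u)) y - deriv (fun u => f (u, y)) t)
      (h' (-1, 1)) x := by
  have hdiff : ∀ᶠ q in 𝓝 (x, y), DifferentiableAt ℝ f q :=
    (hf.eventually (by simp)).mono fun q hq => hq.differentiableAt two_ne_zero
  have hfg : (fun q => fderiv ℝ f q (1, 0)) =ᶠ[𝓝 (x, y)] h := by
    filter_upwards [hdiff, hfh] with q hq hqh
    rw [← hqh, hq.hasFDerivAt.hasDerivAt_slice_fst.deriv]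
  refine (hf.hasDerivAt_fderiv_apply_slice_fst hh hfg (-1, 1)).congr_of_eventuallyEq ?_
  have hslice : Tendsto (fun t : ℝ => (t, y)) (𝓝 x) (𝓝 (x, y)) :=
    (continuous_id.prodMk continuous_const).tendsto x
  filter_upwards [hslice.eventually hdiff] with t ht
  have hv : ((-1, 1) : ℝ × ℝ) = (0, 1) - (1, 0) := by norm_num
  rw [ht.hasFDerivAt.hasDerivAt_slice_fst.deriv, ht.hasFDerivAt.hasDerivAt_slice_snd.deriv, hv,
    map_sub]

end Slices

lemma hasDerivAt_rpow_mul_eq_zero {G W : ℝ → ℝ} {g W' r x : ℝ} (hGx : 0 < G x)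
    (hG : HasDerivAt G g x) (hW : HasDerivAt W W' x) (h : r * g * W x + G x * W' = 0) :
    HasDerivAt (fun t => G t ^ r * W t) 0 x := by
  refine ((hG.rpow_const (p := r) (Or.inl hGx.ne')).mul hW).congr_deriv ?_
  rw [Real.rpow_sub_one hGx.ne']
  field_simp
  linear_combination G x ^ r * h

section Complex

open Complex

lemma ContinuousLinearMap.apply_eq_re_mul_add_im_mul (L : ℂ →L[ℝ] ℝ) (v : ℂ) :
    L v = v.re * L 1 + v.im * L I := by
  have hv : v = v.re • (1 : ℂ) + v.im • I := by apply Complex.ext <;> simp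
  conv_lhs => rw [hv, map_add, map_smul, map_smul, smul_eq_mul, smul_eq_mul]

lemma dotR_grad2_right (f : ℂ → ℝ) (z v : ℂ) : dotR v (grad2 f z) = fderiv ℝ f z v := by
  rw [(fderiv ℝ f z).apply_eq_re_mul_add_im_mul, dotR, grad2]

lemma normSq_smul_gradPerp_sub {ψ : ℂ → ℝ} {z : ℂ} {μ c : ℝ}
    (h : fderiv ℝ ψ z ((c + I) * z) = -μ * normSq z) :
    normSq z • (gradPerp ψ z - μ • z) = fderiv ℝ ψ z z • ((c + I) * z) := by
  rw [(fderiv ℝ ψ z).apply_eq_re_mul_add_im_mul] at h ⊢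
  simp only [normSq_apply, mul_re, mul_im, add_re, add_im, ofReal_re, ofReal_im, I_re,
    I_im] at h
  apply Complex.ext <;>
    simp only [gradPerp, normSq_apply, smul_re, smul_im, sub_re, sub_im, mul_re, mul_im, add_re,
      add_im, ofReal_re, ofReal_im, I_re, I_im, smul_eq_mul]
  · linear_combination (-z.re) * h
  · linear_combination (-z.im) * h

lemma mul_eq_mul_fderiv_of_euler {ψ w : ℂ → ℝ} {z : ℂ} {μ c₁ c₂ : ℝ}
    (hψ : fderiv ℝ ψ z ((c₁ + I) * z) = -μ * normSq z)
    (hw : -w z + dotR (gradPerp ψ z - μ • z) (grad2 w z) = 0) :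
    w z * ((c₂ - c₁) * normSq z) =
      (fderiv ℝ ψ z ((c₂ + I) * z) - fderiv ℝ ψ z ((c₁ + I) * z)) *
        fderiv ℝ w z ((c₁ + I) * z) := by
  have hG : fderiv ℝ ψ z ((c₂ + I) * z) - fderiv ℝ ψ z ((c₁ + I) * z)
      = (c₂ - c₁) * fderiv ℝ ψ z z := by
    rw [← map_sub, ← sub_mul, add_sub_add_right_eq_sub, ← ofReal_sub, ← real_smul, map_smul,
      smul_eq_mul]
  have hpar := congrArg (fderiv ℝ w z) (normSq_smul_gradPerp_sub (c := c₁) hψ)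
  rw [dotR_grad2_right] at hw
  simp only [map_smul, smul_eq_mul] at hpar
  rw [hG]
  linear_combination (c₂ - c₁) * hpar - (c₂ - c₁) * normSq z * hw

def adaptedMap (A : ℝ × ℝ → ℝ) (p : ℝ × ℝ) : ℂ :=
  (Real.exp (A p) : ℂ) * exp (((p.1 + p.2 : ℝ) : ℂ) * I)

lemma adaptedMap_eq_exp (A : ℝ × ℝ → ℝ) :
    adaptedMap A = fun p => exp (ofRealCLM (A p) + ofRealCLM (p.1 + p.2) * I) := by
  ext p
  rw [adaptedMap, ofReal_exp, ← exp_add]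
  rfl

variable {A : ℝ × ℝ → ℝ} {p : ℝ × ℝ}

lemma adaptedMap_ne_zero : adaptedMap A p ≠ 0 := by
  rw [adaptedMap_eq_exp]
  exact exp_ne_zero _

lemma normSq_adaptedMap : normSq (adaptedMap A p) = Real.exp (2 * A p) := by
  rw [normSq_eq_norm_sq, adaptedMap_eq_exp, norm_exp, ← Real.exp_nat_mul]
  simp [mul_comm]

lemma hasFDerivAt_adaptedMap {A' : ℝ × ℝ →L[ℝ] ℝ} (hA : HasFDerivAt A A' p) :
    HasFDerivAt (adaptedMap A)
      (adaptedMap A p • (ofRealCLM.comp A' +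
        I • ofRealCLM.comp (ContinuousLinearMap.fst ℝ ℝ ℝ + ContinuousLinearMap.snd ℝ ℝ ℝ))) p := by
  have hlin : HasFDerivAt (fun q : ℝ × ℝ => ofRealCLM (q.1 + q.2) * I)
      (I • ofRealCLM.comp (ContinuousLinearMap.fst ℝ ℝ ℝ + ContinuousLinearMap.snd ℝ ℝ ℝ)) p := by
    convert (I • ofRealCLM.comp (ContinuousLinearMap.fst ℝ ℝ ℝ +
      ContinuousLinearMap.snd ℝ ℝ ℝ)).hasFDerivAt using 1
    ext q
    simp [mul_comm, mul_add]
  rw [adaptedMap_eq_exp]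
  exact ((ofRealCLM.hasFDerivAt.comp p hA).add hlin).cexp

lemma contDiffAt_adaptedMap {n : WithTop ℕ∞} (hA : ContDiffAt ℝ n A p) :
    ContDiffAt ℝ n (adaptedMap A) p := by
  rw [adaptedMap_eq_exp]
  exact ((ofRealCLM.contDiff.contDiffAt.comp p hA).add ((ofRealCLM.contDiff.comp
    (contDiff_fst.add contDiff_snd)).mul contDiff_const).contDiffAt).cexp

variable {f : ℂ → ℝ} {A' : ℝ × ℝ →L[ℝ] ℝ} {β φ : ℝ}

lemma hasDerivAt_comp_adaptedMap_slice_fst (hf : DifferentiableAt ℝ f (adaptedMap A (β, φ)))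
    (hA : HasFDerivAt A A' (β, φ)) :
    HasDerivAt (fun b => f (adaptedMap A (b, φ)))
      (fderiv ℝ f (adaptedMap A (β, φ)) ((A' (1, 0) + I) * adaptedMap A (β, φ))) β := by
  refine (HasFDerivAt.hasDerivAt_slice_fst
    (hf.hasFDerivAt.comp (β, φ) (hasFDerivAt_adaptedMap hA))).congr_deriv ?_
  rw [ContinuousLinearMap.comp_apply]
  congr 1
  simp
  ring

lemma hasDerivAt_comp_adaptedMap_slice_snd (hf : DifferentiableAt ℝ f (adaptedMap A (β, φ)))
    (hA : HasFDerivAt A A' (β, φ)) :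
    HasDerivAt (fun t => f (adaptedMap A (β, t)))
      (fderiv ℝ f (adaptedMap A (β, φ)) ((A' (0, 1) + I) * adaptedMap A (β, φ))) φ := by
  refine (HasFDerivAt.hasDerivAt_slice_snd
    (hf.hasFDerivAt.comp (β, φ) (hasFDerivAt_adaptedMap hA))).congr_deriv ?_
  rw [ContinuousLinearMap.comp_apply]
  congr 1
  simp
  ring

lemma hasDerivAt_rpow_mul_vorticity_eq_zero {μ : ℝ} (hμ : μ ≠ 0) {ψ w : ℂ → ℝ}
    (hA : ContDiffAt ℝ 2 A (β, φ)) (hψ : ContDiffAt ℝ 2 ψ (adaptedMap A (β, φ)))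
    (hw : DifferentiableAt ℝ w (adaptedMap A (β, φ)))
    (hψβ : ∀ᶠ q in 𝓝 (β, φ),
      deriv (fun b => ψ (adaptedMap A (b, q.2))) q.1 = -μ * Real.exp (2 * A q))
    (hG : 0 < deriv (fun t => ψ (adaptedMap A (β, t))) φ -
      deriv (fun b => ψ (adaptedMap A (b, φ))) β)
    (hE : -w (adaptedMap A (β, φ)) + dotR (gradPerp ψ (adaptedMap A (β, φ)) -
      μ • adaptedMap A (β, φ)) (grad2 w (adaptedMap A (β, φ))) = 0) :
    HasDerivAt (fun b => (deriv (fun t => ψ (adaptedMap A (b, t))) φ -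
      deriv (fun b' => ψ (adaptedMap A (b', φ))) b) ^ (1 / (2 * μ)) * w (adaptedMap A (b, φ)))
      0 β := by
  set z := adaptedMap A (β, φ)
  set A' := fderiv ℝ A (β, φ)
  have hA' : HasFDerivAt A A' (β, φ) := (hA.differentiableAt two_ne_zero).hasFDerivAt
  have hψz := hψ.differentiableAt two_ne_zero
  have hG_deriv := hasDerivAt_deriv_slice_snd_sub_deriv_slice_fst
    (f := fun q => ψ (adaptedMap A q)) (hψ.comp (β, φ) (contDiffAt_adaptedMap hA))
    (((hA'.const_mul 2).exp).const_mul (-μ)) hψβ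
  have hψ_fst := hasDerivAt_comp_adaptedMap_slice_fst hψz hA'
  have hψ_snd := hasDerivAt_comp_adaptedMap_slice_snd hψz hA'
  have hψ_fst_eq : fderiv ℝ ψ z ((A' (1, 0) + I) * z) = -μ * normSq z := by
    rw [← hψ_fst.deriv, normSq_adaptedMap]
    exact hψβ.self_of_nhds
  have htransport := mul_eq_mul_fderiv_of_euler (c₂ := A' (0, 1)) hψ_fst_eq hE
  rw [← hψ_fst.deriv, ← hψ_snd.deriv, normSq_adaptedMap] at htransport
  refine hasDerivAt_rpow_mul_eq_zero hG hG_deriv (hasDerivAt_comp_adaptedMap_slice_fst hw hA') ?_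
  have hv : A' (-1, 1) = A' (0, 1) - A' (1, 0) := by
    rw [← map_sub]
    norm_num
  simp only [FunLike.coe_smul, Pi.smul_apply, smul_eq_mul, hv]
  field_simp
  linear_combination -htransport

end Complex

theorem stmt6_general (μ : ℝ) (hμ : 0 < μ) (a : ℝ → ℝ → ℝ)
    (ha : ∀ β : ℝ, 0 < β → ∀ φ : ℝ,
      ContDiffAt ℝ 2 (fun p : ℝ × ℝ => a p.1 p.2) (β, φ))
    (ψtil wtil : ℂ → ℝ)
    (hψ : ∀ z : ℂ, z ≠ 0 → ContDiffAt ℝ 2 ψtil z)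
    (hw : ∀ z : ℂ, z ≠ 0 → ContDiffAt ℝ 1 wtil z) :
    let T : ℝ → ℝ → ℂ := fun β φ =>
      (Real.exp (a β φ) : ℂ) * Complex.exp (((β + φ : ℝ) : ℂ) * Complex.I)
    (∀ β : ℝ, 0 < β → ∀ φ : ℝ,
      deriv (fun b => ψtil (T b φ)) β = -μ * Real.exp (2 * a β φ)) →
    (∀ β : ℝ, 0 < β → ∀ φ : ℝ,
      0 < deriv (fun p => ψtil (T β p)) φ - deriv (fun b => ψtil (T b φ)) β) →
    (∀ β : ℝ, 0 < β → ∀ φ : ℝ,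
      -(wtil (T β φ)) +
        dotR (gradPerp ψtil (T β φ) - μ • T β φ) (grad2 wtil (T β φ)) = 0) →
    ∃ Ω : ℝ → ℝ, ∀ β : ℝ, 0 < β → ∀ φ : ℝ,
      wtil (T β φ) =
        (deriv (fun p => ψtil (T β p)) φ - deriv (fun b => ψtil (T b φ)) β) ^
            (-(1 / (2 * μ))) * Ω φ := by
  intro T hψβ hGpos hEuler
  have hT : T = fun β φ => adaptedMap (fun p : ℝ × ℝ => a p.1 p.2) (β, φ) := rfl
  clear_value T
  subst hT
  beta_reduce at *
  set A : ℝ × ℝ → ℝ := fun p => a p.1 p.2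
  set F : ℝ → ℝ → ℝ := fun β φ => (deriv (fun t => ψtil (adaptedMap A (β, t))) φ -
    deriv (fun b => ψtil (adaptedMap A (b, φ))) β) ^ (1 / (2 * μ)) * wtil (adaptedMap A (β, φ))
  have hF (φ : ℝ) : ∀ β ∈ Ioi (0 : ℝ), HasDerivAt (F · φ) 0 β := by
    intro β hβ
    have hψβ' : ∀ᶠ q in 𝓝 (β, φ), deriv (fun b => ψtil (adaptedMap A (b, q.2))) q.1 =
        -μ * Real.exp (2 * a q.1 q.2) := by
      filter_upwards [(continuous_fst.tendsto (β, φ)).eventually (eventually_gt_nhds hβ)]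
        with q hq using hψβ q.1 hq q.2
    exact hasDerivAt_rpow_mul_vorticity_eq_zero hμ.ne' (ha β hβ φ) (hψ _ adaptedMap_ne_zero)
      ((hw _ adaptedMap_ne_zero).differentiableAt one_ne_zero) hψβ' (hGpos β hβ φ) (hEuler β hβ φ)
  refine ⟨F 1, fun β hβ φ => ?_⟩
  have hconst : F β φ = F 1 φ := isOpen_Ioi.is_const_of_deriv_eq_zero isPreconnected_Ioi
    (fun b hb => (hF φ b hb).differentiableAt.differentiableWithinAt)
    (fun b hb => (hF φ b hb).deriv) hβ (mem_Ioi.2 one_pos)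
  have hG := hGpos β hβ φ
  rw [← hconst, Real.rpow_neg hG.le, inv_mul_cancel_left₀ (Real.rpow_pos_of_pos hG _).ne']

/-- **Separated form of the vorticity in adapted coordinates.**
With `T(β,φ) = e^{a(β,φ)}(cos(β+φ), sin(β+φ))`, `ψ = ψ̃ ∘ T`, `w = w̃ ∘ T`, assume
`∂_βψ = −μ e^{2a}`, `∂_φψ − ∂_βψ > 0`, and the reduced Euler equation
`−w̃ + (∇^⊥ψ̃ − μz)·∇w̃ = 0` on the range of `T`. Then
`(∂_φψ − ∂_βψ)^{1/(2μ)} w` is independent of `β`: there is `Ω : ℝ → ℝ` with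
`w(β,φ) = (∂_φψ(β,φ) − ∂_βψ(β,φ))^{−1/(2μ)} Ω(φ)` for all `β > 0`, `φ`. -/
theorem stmt6 (μ : ℝ) (hμ : 0 < μ) (a : ℝ → ℝ → ℝ)
    (ha : ∀ β : ℝ, 0 < β → ∀ φ : ℝ,
      ContDiffAt ℝ 2 (fun p : ℝ × ℝ => a p.1 p.2) (β, φ))
    (haφβ : ∀ β : ℝ, 0 < β → ∀ φ : ℝ,
      fderiv ℝ (fun p : ℝ × ℝ => a p.1 p.2) (β, φ) (0, 1) -
        fderiv ℝ (fun p : ℝ × ℝ => a p.1 p.2) (β, φ) (1, 0) ≠ 0)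
    (ψtil wtil : ℂ → ℝ)
    (hψ : ∀ z : ℂ, z ≠ 0 → ContDiffAt ℝ 2 ψtil z)
    (hw : ∀ z : ℂ, z ≠ 0 → ContDiffAt ℝ 1 wtil z) :
    let T : ℝ → ℝ → ℂ := fun β φ =>
      (Real.exp (a β φ) : ℂ) * Complex.exp (((β + φ : ℝ) : ℂ) * Complex.I)
    (∀ β : ℝ, 0 < β → ∀ φ : ℝ,
      deriv (fun b => ψtil (T b φ)) β = -μ * Real.exp (2 * a β φ)) →
    (∀ β : ℝ, 0 < β → ∀ φ : ℝ,
      0 < deriv (fun p => ψtil (T β p)) φ - deriv (fun b => ψtil (T b φ)) β) →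
    (∀ β : ℝ, 0 < β → ∀ φ : ℝ,
      -(wtil (T β φ)) +
        dotR (gradPerp ψtil (T β φ) - μ • T β φ) (grad2 wtil (T β φ)) = 0) →
    ∃ Ω : ℝ → ℝ, ∀ β : ℝ, 0 < β → ∀ φ : ℝ,
      wtil (T β φ) =
        (deriv (fun p => ψtil (T β p)) φ - deriv (fun b => ψtil (T b φ)) β) ^
            (-(1 / (2 * μ))) * Ω φ :=
  stmt6_general μ hμ a ha ψtil wtil hψ hw
end
end

section
/- Injectivity of D^{(n,s)} on bounded continuous functions: let n ∈ ℤ and s ∈ ℝ with s ≠ 0. If f : [0,∞) → ℂ is continuous, bounded, differentiable on (0,∞), and satisfies β·(f′(β) − i·n·f(β)) − s·f(β) = 0 for all β > 0, then f(β) = 0 for all β ≥ 0. -/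
open Set Filter Topology

/-!
With the integrating factor `e^{-aβ} β^{-s}`, the equation `β (f' - a f) = s f` says exactly that
`f(β) e^{-aβ} β^{-s}` is constant on `(0, ∞)`. For `a = i n` this gives `‖f(β)‖ = c β^s`, and a bounded
function of this form vanishes when `s ≠ 0`: let `β → ∞` if `s > 0` and `β → 0⁺` if `s < 0`.
Continuity at `0` then extends `f = 0` to the endpoint.
-/

theorem hasDerivAt_mul_cexp_mul_rpow_eq_zero {f : ℝ → ℂ} {a : ℂ} {s β : ℝ} (hβ : 0 < β)
    (hf : DifferentiableAt ℝ f β) (hode : (β : ℂ) * (deriv f β - a * f β) - s * f β = 0) :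
    HasDerivAt (fun x : ℝ => f x * Complex.exp (-a * x) * ((x ^ (-s) : ℝ) : ℂ)) 0 β := by
  have hexp : HasDerivAt (fun x : ℝ => Complex.exp (-a * x)) (Complex.exp (-a * β) * -a) β := by
    simpa using ((hasDerivAt_id β).ofReal_comp.const_mul (-a)).cexp
  have hpow : HasDerivAt (fun x : ℝ => ((x ^ (-s) : ℝ) : ℂ)) ((-s * β ^ (-s - 1) : ℝ) : ℂ) β :=
    (Real.hasDerivAt_rpow_const (Or.inl hβ.ne')).ofReal_comp
  refine ((hf.hasDerivAt.mul hexp).mul hpow).congr_deriv ?_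
  have hsplit : β ^ (-s) = β ^ (-s - 1) * β := by
    rw [← Real.rpow_add_one hβ.ne']
    ring_nf
  push_cast [Pi.mul_apply, hsplit]
  linear_combination Complex.exp (-a * β) * ((β ^ (-s - 1) : ℝ) : ℂ) * hode

theorem exists_forall_mul_cexp_mul_rpow_eq {f : ℝ → ℂ} {a : ℂ} {s : ℝ}
    (hdiff : ∀ β : ℝ, 0 < β → DifferentiableAt ℝ f β)
    (hode : ∀ β : ℝ, 0 < β → (β : ℂ) * (deriv f β - a * f β) - s * f β = 0) :
    ∃ C : ℂ, ∀ β ∈ Ioi (0 : ℝ), f β * Complex.exp (-a * β) * ((β ^ (-s) : ℝ) : ℂ) = C := by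
  have hderiv (β : ℝ) (hβ : 0 < β) := hasDerivAt_mul_cexp_mul_rpow_eq_zero hβ (hdiff β hβ) (hode β hβ)
  exact isOpen_Ioi.exists_is_const_of_deriv_eq_zero isPreconnected_Ioi
    (fun β hβ => (hderiv β hβ).differentiableAt.differentiableWithinAt)
    (fun β hβ => (hderiv β hβ).deriv)

theorem exists_filter_tendsto_rpow_nhds_zero {s : ℝ} (hs : s ≠ 0) :
    ∃ l : Filter ℝ, l.NeBot ∧ (∀ᶠ x in l, 0 < x) ∧ Tendsto (fun x : ℝ => x ^ s) l (𝓝 0) := by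
  rcases hs.lt_or_gt with hneg | hpos
  · refine ⟨atTop, inferInstance, eventually_gt_atTop 0, ?_⟩
    simpa using tendsto_rpow_neg_atTop (neg_pos.mpr hneg)
  · refine ⟨𝓝[>] 0, inferInstance, self_mem_nhdsWithin, ?_⟩
    have := (Real.continuousAt_rpow_const 0 s (Or.inr hpos.le)).tendsto.mono_left
      (nhdsWithin_le_nhds (s := Ioi (0 : ℝ)))
    simpa [Real.zero_rpow hs] using this

theorem eq_zero_of_norm_mul_rpow_eq_of_bounded {E : Type*} [NormedAddCommGroup E] {f : ℝ → E}
    {s c M : ℝ} (hs : s ≠ 0) (hM : ∀ β : ℝ, 0 < β → ‖f β‖ ≤ M)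
    (hc : ∀ β : ℝ, 0 < β → ‖f β‖ * β ^ (-s) = c) {β : ℝ} (hβ : 0 < β) : f β = 0 := by
  obtain ⟨l, hl, hpos, hlim⟩ := exists_filter_tendsto_rpow_nhds_zero (neg_ne_zero.mpr hs)
  have hc_le : c ≤ 0 := by
    refine le_of_tendsto_of_tendsto tendsto_const_nhds (by simpa using hlim.const_mul M) ?_
    filter_upwards [hpos] with x hx
    rw [← hc x hx]
    exact mul_le_mul_of_nonneg_right (hM x hx) (Real.rpow_nonneg hx.le _)
  have hnorm : ‖f β‖ * β ^ (-s) ≤ 0 * β ^ (-s) := by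
    rw [hc β hβ, zero_mul]
    exact hc_le
  exact norm_le_zero_iff.mp (le_of_mul_le_mul_right hnorm (Real.rpow_pos_of_pos hβ _))

/-- **Injectivity of `D^{(n,s)}` on bounded continuous functions.**
If `f : [0,∞) → ℂ` is continuous, bounded, differentiable on `(0,∞)` and satisfies
`β (f'(β) - i n f(β)) - s f(β) = 0` for all `β > 0` with `s ≠ 0`, then `f ≡ 0` on `[0,∞)`. -/
theorem stmt9 (n : ℤ) (s : ℝ) (hs : s ≠ 0) (f : ℝ → ℂ)
    (hcont : ContinuousOn f (Set.Ici 0))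
    (hbd : ∃ M : ℝ, ∀ β : ℝ, 0 ≤ β → ‖f β‖ ≤ M)
    (hdiff : ∀ β : ℝ, 0 < β → DifferentiableAt ℝ f β)
    (hode : ∀ β : ℝ, 0 < β →
      (β : ℂ) * (deriv f β - Complex.I * (n : ℂ) * f β) - (s : ℂ) * f β = 0) :
    ∀ β : ℝ, 0 ≤ β → f β = 0 := by
  obtain ⟨M, hM⟩ := hbd
  obtain ⟨C, hC⟩ := exists_forall_mul_cexp_mul_rpow_eq hdiff hode
  have hnorm (β : ℝ) (hβ : 0 < β) : ‖f β‖ * β ^ (-s) = ‖C‖ := by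
    have hexp : ‖Complex.exp (-(Complex.I * n) * β)‖ = 1 := by
      simp [Complex.norm_exp]
    rw [← hC β hβ, norm_mul, norm_mul, hexp, mul_one, Complex.norm_real,
      Real.norm_of_nonneg (Real.rpow_nonneg hβ.le _)]
  have hvanish : EqOn f 0 (Ioi 0) := fun β hβ =>
    eq_zero_of_norm_mul_rpow_eq_of_bounded hs (fun x hx => hM x hx.le) hnorm hβ
  intro β hβ
  exact hvanish.of_subset_closure hcont continuousOn_const Ioi_subset_Ici_self
    (by rw [closure_Ioi]) hβ
end

section
/- Bounded right inverse of D^{(n,s)} on C_b: let n ∈ ℤ, s ∈ ℝ with s ≠ 0, and f ∈ C_b. Then there exists a unique u ∈ C_b, differentiable on (0,∞), with (D^{(n,s)}u)(β) = f(β) for all β > 0; it is given by u(β) = −e^{inβ}∫_1^∞ f(βy)·e^{−inβy}·y^{−s−1} dy if s > 0, and u(β) = e^{inβ}∫_0^1 f(βy)·e^{−inβy}·y^{−s−1} dy if s < 0, and it satisfies ‖u‖_{C_b} ≤ ‖f‖_{C_b}/|s|. -/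
open Set MeasureTheory Filter Topology

noncomputable section

/-!
Writing `u = e^{inβ} β^s W` turns `D^{(n,s)} u = f` into `β^{s+1} W' = f e^{-inβ}`. The primitive
`W` of `f(t) e^{-int} t^{-s-1}` is taken from `∞` if `s > 0` and from `0` if `s < 0`, the ends at
which this weight is integrable; the substitution `t = βy` turns `β^s W(β)` into the stated
formula. Since `∫ y^{-s-1}` over `(1,∞)`, resp. `(0,1)`, equals `1/|s|`, the formula gives the
bound, and by dominated convergence it is continuous up to `β = 0`. Conversely, a solution of the
homogeneous equation is `c e^{inβ} β^s`, which is bounded on `(0,∞)` only for `c = 0`.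
-/

def twistedEulerOp (n : ℤ) (s : ℝ) (u : ℝ → ℂ) (β : ℝ) : ℂ :=
  (β : ℂ) * (deriv u β - Complex.I * (n : ℂ) * u β) - (s : ℂ) * u β

section TwistedEulerOp

variable {n : ℤ} {s β : ℝ}

theorem twistedEulerOp_congr {u v : ℝ → ℂ} (h : u =ᶠ[𝓝 β] v) :
    twistedEulerOp n s u β = twistedEulerOp n s v β := by
  simp only [twistedEulerOp, h.deriv_eq, h.eq_of_nhds]

theorem twistedEulerOp_sub {u v : ℝ → ℂ} (hu : DifferentiableAt ℝ u β)
    (hv : DifferentiableAt ℝ v β) :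
    twistedEulerOp n s (u - v) β = twistedEulerOp n s u β - twistedEulerOp n s v β := by
  simp only [twistedEulerOp, deriv_sub hu hv, Pi.sub_apply]
  ring

theorem twistedEulerOp_phase_rpow_mul {W : ℝ → ℂ} {w : ℂ} (hβ : 0 < β) (hW : HasDerivAt W w β) :
    DifferentiableAt ℝ (fun x : ℝ => Complex.exp (Complex.I * n * x) * ((x ^ s : ℝ) : ℂ) * W x) β ∧
      twistedEulerOp n s
          (fun x : ℝ => Complex.exp (Complex.I * n * x) * ((x ^ s : ℝ) : ℂ) * W x) β =
        Complex.exp (Complex.I * n * β) * ((β ^ (s + 1) : ℝ) : ℂ) * w := by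
  have hE : HasDerivAt (fun x : ℝ => Complex.exp (Complex.I * n * x))
      (Complex.exp (Complex.I * n * β) * (Complex.I * n)) β := by
    simpa using ((Complex.ofRealCLM.hasDerivAt (x := β)).const_mul (Complex.I * n)).cexp
  have hP : HasDerivAt (fun x : ℝ => ((x ^ s : ℝ) : ℂ)) ((s * β ^ (s - 1) : ℝ) : ℂ) β :=
    (Real.hasDerivAt_rpow_const (Or.inl hβ.ne')).ofReal_comp
  have hU : HasDerivAt
      (fun x : ℝ => Complex.exp (Complex.I * n * x) * ((x ^ s : ℝ) : ℂ) * W x) _ β :=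
    (hE.mul hP).mul hW
  refine ⟨hU.differentiableAt, ?_⟩
  have h1 : β * β ^ (s - 1) = β ^ s := by
    rw [mul_comm, ← Real.rpow_add_one hβ.ne', sub_add_cancel]
  have h2 : β * β ^ s = β ^ (s + 1) := by rw [mul_comm, Real.rpow_add_one hβ.ne']
  rw [twistedEulerOp, hU.deriv]
  simp only [Pi.mul_apply]
  rw [← h2, ← h1]
  push_cast
  ring

theorem exists_eq_phase_rpow_mul_of_twistedEulerOp_eq_zero {w : ℝ → ℂ}
    (hwd : ∀ β > 0, DifferentiableAt ℝ w β) (hw : ∀ β > 0, twistedEulerOp n s w β = 0) :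
    ∃ c : ℂ, ∀ β > 0, w β = Complex.exp (Complex.I * n * β) * ((β ^ s : ℝ) : ℂ) * c := by
  set W : ℝ → ℂ := fun x => Complex.exp (-(Complex.I * n * x)) * ((x ^ (-s) : ℝ) : ℂ) * w x
  have hwW : EqOn w (fun x : ℝ => Complex.exp (Complex.I * n * x) * ((x ^ s : ℝ) : ℂ) * W x)
      (Ioi 0) := by
    intro x hx
    have hx' : ((x ^ s : ℝ) : ℂ) ≠ 0 := by exact_mod_cast (Real.rpow_pos_of_pos hx s).ne'
    simp only [W, Complex.exp_neg, Real.rpow_neg hx.le, Complex.ofReal_inv]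
    field_simp
  have hWd : ∀ x > 0, DifferentiableAt ℝ W x := fun x hx =>
    ((by fun_prop : Differentiable ℝ fun x : ℝ => Complex.exp (-(Complex.I * n * x))) x).mul
      (Real.hasDerivAt_rpow_const (p := -s) (Or.inl hx.ne')).ofReal_comp.differentiableAt
      |>.mul (hwd x hx)
  have hW' : EqOn (deriv W) 0 (Ioi 0) := by
    intro x hx
    obtain ⟨-, hU⟩ := twistedEulerOp_phase_rpow_mul (n := n) (s := s) hx (hWd x hx).hasDerivAt
    rw [← twistedEulerOp_congr (eventually_of_mem (Ioi_mem_nhds hx) hwW), hw x hx] at hU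
    have hx' : ((x ^ (s + 1) : ℝ) : ℂ) ≠ 0 := by exact_mod_cast (Real.rpow_pos_of_pos hx _).ne'
    simpa [Complex.exp_ne_zero, hx'] using hU.symm
  obtain ⟨c, hc⟩ := isOpen_Ioi.exists_is_const_of_deriv_eq_zero isPreconnected_Ioi
    (fun x hx => (hWd x hx).differentiableWithinAt) hW'
  exact ⟨c, fun β hβ => (hwW hβ).trans (by simp only [hc β hβ])⟩

theorem eq_zero_of_forall_mul_rpow_le (hs : s ≠ 0) {d K : ℝ} (hd : 0 ≤ d)
    (h : ∀ β > 0, d * β ^ s ≤ K) : d = 0 := by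
  by_contra hd0
  have hd' : 0 < d := lt_of_le_of_ne hd (Ne.symm hd0)
  have hK : 0 ≤ K := hd.trans (by simpa using h 1 one_pos)
  have hq : 0 < (K + 1) / d := by positivity
  -- at `β = ((K+1)/d)^{1/s}` the left side equals `K + 1`
  have := h (((K + 1) / d) ^ s⁻¹) (Real.rpow_pos_of_pos hq _)
  rw [← Real.rpow_mul hq.le, inv_mul_cancel₀ hs, Real.rpow_one, mul_div_cancel₀ _ hd'.ne'] at this
  linarith

theorem eqOn_zero_of_twistedEulerOp_eq_zero (hs : s ≠ 0) {w : ℝ → ℂ}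
    (hwc : ContinuousOn w (Ici 0)) {K : ℝ} (hwb : ∀ β, 0 ≤ β → ‖w β‖ ≤ K)
    (hwd : ∀ β > 0, DifferentiableAt ℝ w β) (hw : ∀ β > 0, twistedEulerOp n s w β = 0) :
    EqOn w 0 (Ici 0) := by
  obtain ⟨c, hc⟩ := exists_eq_phase_rpow_mul_of_twistedEulerOp_eq_zero hwd hw
  have hnorm : ∀ β > 0, ‖w β‖ = ‖c‖ * β ^ s := fun β hβ => by
    rw [hc β hβ, norm_mul, norm_mul, Complex.norm_exp, Complex.norm_real,
      Real.norm_of_nonneg (Real.rpow_nonneg hβ.le s)]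
    simp [mul_comm]
  have hc0 : c = 0 := norm_eq_zero.mp <|
    eq_zero_of_forall_mul_rpow_le hs (norm_nonneg c) fun β hβ => hnorm β hβ ▸ hwb β hβ.le
  refine EqOn.of_subset_closure (s := Ioi 0) (fun β hβ => ?_) hwc continuousOn_const
    Ioi_subset_Ici_self (by rw [closure_Ioi])
  simp [hc β hβ, hc0]

theorem eqOn_of_twistedEulerOp_eq (hs : s ≠ 0) {u v : ℝ → ℂ} (huc : ContinuousOn u (Ici 0))
    (hvc : ContinuousOn v (Ici 0)) {Ku Kv : ℝ} (hub : ∀ β, 0 ≤ β → ‖u β‖ ≤ Ku)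
    (hvb : ∀ β, 0 ≤ β → ‖v β‖ ≤ Kv) (hud : ∀ β > 0, DifferentiableAt ℝ u β)
    (hvd : ∀ β > 0, DifferentiableAt ℝ v β)
    (h : ∀ β > 0, twistedEulerOp n s u β = twistedEulerOp n s v β) : EqOn u v (Ici 0) := by
  have hw := eqOn_zero_of_twistedEulerOp_eq_zero hs (huc.sub hvc)
    (fun β hβ => (norm_sub_le _ _).trans (add_le_add (hub β hβ) (hvb β hβ)))
    (fun β hβ => (hud β hβ).sub (hvd β hβ))
    (fun β hβ => by rw [twistedEulerOp_sub (hud β hβ) (hvd β hβ), h β hβ, sub_self])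
  exact fun β hβ => sub_eq_zero.mp (hw hβ)

end TwistedEulerOp

theorem hasDerivAt_setIntegral_Ioi {E : Type*} [NormedAddCommGroup E] [NormedSpace ℝ E]
    [CompleteSpace E] {h : ℝ → E} {a b : ℝ} (hab : a < b)
    (hint : IntegrableOn h (Ioi a)) (hb : ContinuousAt h b) :
    HasDerivAt (fun x => ∫ t in Ioi x, h t) (-h b) b := by
  have hsplit : ∀ x ∈ Ioi a, ∫ t in Ioi x, h t = (∫ t in Ioi a, h t) - ∫ t in a..x, h t := by
    intro x hx
    rw [intervalIntegral.integral_of_le (le_of_lt hx), eq_sub_iff_add_eq', ← setIntegral_union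
      (Ioc_disjoint_Ioi le_rfl) measurableSet_Ioi (hint.mono_set Ioc_subset_Ioi_self)
      (hint.mono_set (Ioi_subset_Ioi (le_of_lt hx))), Ioc_union_Ioi_eq_Ioi (le_of_lt hx)]
  refine HasDerivAt.congr_of_eventuallyEq ?_ (eventually_of_mem (Ioi_mem_nhds hab) hsplit)
  refine (intervalIntegral.integral_hasDerivAt_right ?_ ?_ hb).const_sub _
  · exact (intervalIntegrable_iff_integrableOn_Ioc_of_le hab.le).2
      (hint.mono_set Ioc_subset_Ioi_self)
  · exact AEStronglyMeasurable.stronglyMeasurableAtFilter_of_mem hint.aestronglyMeasurable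
      (Ioi_mem_nhds hab)

section RpowWeight

variable {g : ℝ → ℂ} {M p : ℝ} {S : Set ℝ}

theorem norm_mul_rpow_le {y : ℝ} (hy : 0 ≤ y) (hg : ‖g y‖ ≤ M) :
    ‖g y * ((y ^ p : ℝ) : ℂ)‖ ≤ M * y ^ p := by
  rw [norm_mul, Complex.norm_real, Real.norm_of_nonneg (Real.rpow_nonneg hy p)]
  exact mul_le_mul_of_nonneg_right hg (Real.rpow_nonneg hy p)

theorem ContinuousOn.mul_rpow (hgc : ContinuousOn g S) (hS0 : S ⊆ Ioi 0) :
    ContinuousOn (fun y => g y * ((y ^ p : ℝ) : ℂ)) S :=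
  hgc.mul <| Complex.continuous_ofReal.comp_continuousOn fun y hy =>
    (Real.continuousAt_rpow_const y p (Or.inl (hS0 hy).ne')).continuousWithinAt

theorem integrableOn_mul_rpow (hS : MeasurableSet S) (hS0 : S ⊆ Ioi 0)
    (hgc : ContinuousOn g S) (hgM : ∀ y ∈ S, ‖g y‖ ≤ M)
    (hp : IntegrableOn (fun y => y ^ p) S) :
    IntegrableOn (fun y => g y * ((y ^ p : ℝ) : ℂ)) S := by
  refine (hp.const_mul M).mono' ((hgc.mul_rpow hS0).aestronglyMeasurable hS) ?_
  filter_upwards [ae_restrict_mem hS] with y hy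
  exact norm_mul_rpow_le (le_of_lt (hS0 hy)) (hgM y hy)

theorem norm_setIntegral_mul_rpow_le (hS : MeasurableSet S) (hS0 : S ⊆ Ioi 0)
    (hgM : ∀ y ∈ S, ‖g y‖ ≤ M) (hp : IntegrableOn (fun y => y ^ p) S) :
    ‖∫ y in S, g y * ((y ^ p : ℝ) : ℂ)‖ ≤ M * ∫ y in S, y ^ p := by
  rw [← integral_const_mul]
  refine norm_integral_le_of_norm_le (hp.const_mul M) ?_
  filter_upwards [ae_restrict_mem hS] with y hy
  exact norm_mul_rpow_le (le_of_lt (hS0 hy)) (hgM y hy)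

theorem continuousOn_setIntegral_comp_mul_rpow (hS : MeasurableSet S) (hS0 : S ⊆ Ioi 0)
    (hgc : ContinuousOn g (Ici 0)) (hgM : ∀ t, 0 ≤ t → ‖g t‖ ≤ M)
    (hp : IntegrableOn (fun y => y ^ p) S) :
    ContinuousOn (fun β : ℝ => ∫ y in S, g (β * y) * ((y ^ p : ℝ) : ℂ)) (Ici 0) := by
  have hmaps : ∀ β ∈ Ici (0 : ℝ), ∀ y ∈ S, β * y ∈ Ici 0 := fun β hβ y hy =>
    mem_Ici.2 <| mul_nonneg hβ (le_of_lt (hS0 hy))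
  refine continuousOn_of_dominated (bound := fun y => M * y ^ p) (fun β hβ => ?_)
    (fun β hβ => ?_) (hp.const_mul M) ?_
  · exact (integrableOn_mul_rpow hS hS0 (hgc.comp (by fun_prop) (hmaps β hβ))
      (fun y hy => hgM (β * y) (hmaps β hβ y hy)) hp).aestronglyMeasurable
  · filter_upwards [ae_restrict_mem hS] with y hy
    exact norm_mul_rpow_le (g := fun y => g (β * y)) (le_of_lt (hS0 hy))
      (hgM (β * y) (hmaps β hβ y hy))
  · filter_upwards [ae_restrict_mem hS] with y hy
    exact (hgc.comp (by fun_prop) fun β hβ => hmaps β hβ y hy).mul continuousOn_const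

theorem integrableOn_Ioc_rpow (hp : -1 < p) (b : ℝ) :
    IntegrableOn (fun y : ℝ => y ^ p) (Ioc 0 b) :=
  (intervalIntegral.intervalIntegrable_rpow' hp).1

end RpowWeight

section EulerInverse

variable {g : ℝ → ℂ} {M s β : ℝ}

theorem integral_Ioi_one_rpow_neg_sub_one (hs : 0 < s) :
    ∫ y in Ioi (1 : ℝ), y ^ (-s - 1) = |s|⁻¹ := by
  rw [integral_Ioi_rpow_of_lt (by linarith) one_pos, abs_of_pos hs]
  simp [neg_div]

theorem integral_Ioc_zero_one_rpow_neg_sub_one (hs : s < 0) :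
    ∫ y in Ioc (0 : ℝ) 1, y ^ (-s - 1) = |s|⁻¹ := by
  rw [← intervalIntegral.integral_of_le zero_le_one, integral_rpow (Or.inl (by linarith)),
    abs_of_neg hs, sub_add_cancel, Real.zero_rpow (by linarith)]
  simp [div_neg]

theorem comp_mul_mul_rpow_eq (hβ : 0 < β) {y : ℝ} (hy : 0 ≤ y) :
    g (β * y) * ((y ^ (-s - 1) : ℝ) : ℂ) =
      ((β ^ s : ℝ) : ℂ) * (β * (g (β * y) * (((β * y) ^ (-s - 1) : ℝ) : ℂ))) := by
  have h : ((β ^ s : ℝ) : ℂ) * β * ((β ^ (-s - 1) : ℝ) : ℂ) = 1 := by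
    rw [← Complex.ofReal_mul, ← Complex.ofReal_mul, ← Real.rpow_add_one hβ.ne',
      ← Real.rpow_add hβ]
    simp
  rw [Real.mul_rpow hβ.le hy]
  push_cast
  linear_combination (-(g (β * y) * ((y ^ (-s - 1) : ℝ) : ℂ))) * h

theorem setIntegral_Ioi_one_comp_mul_mul_rpow (hβ : 0 < β) :
    ∫ y in Ioi (1 : ℝ), g (β * y) * ((y ^ (-s - 1) : ℝ) : ℂ) =
      ((β ^ s : ℝ) : ℂ) * ∫ t in Ioi β, g t * ((t ^ (-s - 1) : ℝ) : ℂ) := by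
  rw [setIntegral_congr_fun measurableSet_Ioi fun y hy =>
      comp_mul_mul_rpow_eq hβ (zero_le_one.trans (le_of_lt hy)), integral_const_mul,
    integral_const_mul]
  congr 1
  rw [← Complex.real_smul,
    integral_comp_mul_left_Ioi' (fun t => g t * ((t ^ (-s - 1) : ℝ) : ℂ)) 1 hβ, mul_one]

theorem intervalIntegral_zero_one_comp_mul_mul_rpow (hβ : 0 < β) :
    ∫ y in (0 : ℝ)..1, g (β * y) * ((y ^ (-s - 1) : ℝ) : ℂ) =
      ((β ^ s : ℝ) : ℂ) * ∫ t in (0 : ℝ)..β, g t * ((t ^ (-s - 1) : ℝ) : ℂ) := by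
  rw [intervalIntegral.integral_congr fun y hy =>
      comp_mul_mul_rpow_eq hβ (by rw [uIcc_of_le zero_le_one] at hy; exact hy.1),
    intervalIntegral.integral_const_mul, intervalIntegral.integral_const_mul]
  congr 1
  rw [← Complex.real_smul,
    intervalIntegral.smul_integral_comp_mul_left (fun t => g t * ((t ^ (-s - 1) : ℝ) : ℂ)),
    mul_zero, mul_one]

def eulerInverse (s : ℝ) (g : ℝ → ℂ) (β : ℝ) : ℂ :=
  if 0 < s then -∫ y in Ioi (1 : ℝ), g (β * y) * ((y ^ (-s - 1) : ℝ) : ℂ)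
  else ∫ y in (0 : ℝ)..1, g (β * y) * ((y ^ (-s - 1) : ℝ) : ℂ)

def eulerPrimitive (s : ℝ) (g : ℝ → ℂ) (x : ℝ) : ℂ :=
  if 0 < s then -∫ t in Ioi x, g t * ((t ^ (-s - 1) : ℝ) : ℂ)
  else ∫ t in (0 : ℝ)..x, g t * ((t ^ (-s - 1) : ℝ) : ℂ)

theorem eulerInverse_eq_rpow_mul_eulerPrimitive (hβ : 0 < β) :
    eulerInverse s g β = ((β ^ s : ℝ) : ℂ) * eulerPrimitive s g β := by
  unfold eulerInverse eulerPrimitive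
  split_ifs
  · rw [setIntegral_Ioi_one_comp_mul_mul_rpow hβ, mul_neg]
  · rw [intervalIntegral_zero_one_comp_mul_mul_rpow hβ]

theorem hasDerivAt_eulerPrimitive (hs : s ≠ 0) (hgc : ContinuousOn g (Ici 0))
    (hgM : ∀ t, 0 ≤ t → ‖g t‖ ≤ M) (hβ : 0 < β) :
    HasDerivAt (eulerPrimitive s g) (g β * ((β ^ (-s - 1) : ℝ) : ℂ)) β := by
  have hgc' : ContinuousOn g (Ioi 0) := hgc.mono Ioi_subset_Ici_self
  have hcont : ContinuousOn (fun t => g t * ((t ^ (-s - 1) : ℝ) : ℂ)) (Ioi 0) :=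
    hgc'.mul_rpow subset_rfl
  rcases hs.lt_or_gt with hneg | hpos
  · have hint : IntervalIntegrable (fun t => g t * ((t ^ (-s - 1) : ℝ) : ℂ)) volume 0 β :=
      (intervalIntegrable_iff_integrableOn_Ioc_of_le hβ.le).2 <|
        integrableOn_mul_rpow measurableSet_Ioc (fun _ ht => ht.1)
          (hgc'.mono fun _ ht => ht.1) (fun t ht => hgM t (le_of_lt ht.1))
          (integrableOn_Ioc_rpow (by linarith) β)
    unfold eulerPrimitive
    simpa only [if_neg hneg.not_gt] using
      intervalIntegral.integral_hasDerivAt_right hint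
        (hcont.stronglyMeasurableAtFilter isOpen_Ioi β hβ)
        (hcont.continuousAt (Ioi_mem_nhds hβ))
  · have hint : IntegrableOn (fun t => g t * ((t ^ (-s - 1) : ℝ) : ℂ)) (Ioi (β / 2)) :=
      integrableOn_mul_rpow measurableSet_Ioi (Ioi_subset_Ioi (half_pos hβ).le)
        (hgc'.mono (Ioi_subset_Ioi (half_pos hβ).le))
        (fun t ht => hgM t ((half_pos hβ).le.trans (le_of_lt ht)))
        (integrableOn_Ioi_rpow_of_lt (by linarith) (half_pos hβ))
    unfold eulerPrimitive
    simpa only [if_pos hpos, neg_neg] using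
      (hasDerivAt_setIntegral_Ioi (half_lt_self hβ) hint
        (hcont.continuousAt (Ioi_mem_nhds hβ))).fun_neg

theorem norm_eulerInverse_le (hs : s ≠ 0) (hgM : ∀ t, 0 ≤ t → ‖g t‖ ≤ M) (hβ : 0 ≤ β) :
    ‖eulerInverse s g β‖ ≤ M / |s| := by
  have hgβ : ∀ y ∈ Ioi (0 : ℝ), ‖g (β * y)‖ ≤ M := fun y hy =>
    hgM _ (mul_nonneg hβ (le_of_lt hy))
  rw [eulerInverse, div_eq_mul_inv]
  split_ifs with hpos
  · rw [norm_neg, ← integral_Ioi_one_rpow_neg_sub_one hpos]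
    exact norm_setIntegral_mul_rpow_le (g := fun y => g (β * y)) measurableSet_Ioi
      (Ioi_subset_Ioi zero_le_one) (fun y hy => hgβ y (mem_Ioi.2 (one_pos.trans hy)))
      (integrableOn_Ioi_rpow_of_lt (by linarith) one_pos)
  · have hneg : s < 0 := lt_of_le_of_ne (not_lt.1 hpos) hs
    rw [intervalIntegral.integral_of_le zero_le_one,
      ← integral_Ioc_zero_one_rpow_neg_sub_one hneg]
    exact norm_setIntegral_mul_rpow_le (g := fun y => g (β * y)) measurableSet_Ioc
      (fun _ hy => hy.1) (fun y hy => hgβ y hy.1) (integrableOn_Ioc_rpow (by linarith) 1)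

theorem continuousOn_eulerInverse (hs : s ≠ 0) (hgc : ContinuousOn g (Ici 0))
    (hgM : ∀ t, 0 ≤ t → ‖g t‖ ≤ M) : ContinuousOn (eulerInverse s g) (Ici 0) := by
  rcases hs.lt_or_gt with hneg | hpos
  · have h : eulerInverse s g =
        fun β => ∫ y in Ioc (0 : ℝ) 1, g (β * y) * ((y ^ (-s - 1) : ℝ) : ℂ) := by
      ext β
      rw [eulerInverse, if_neg hneg.not_gt, intervalIntegral.integral_of_le zero_le_one]
    rw [h]
    exact continuousOn_setIntegral_comp_mul_rpow measurableSet_Ioc (fun _ hy => hy.1) hgc hgM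
      (integrableOn_Ioc_rpow (by linarith) 1)
  · have h : eulerInverse s g =
        fun β => -∫ y in Ioi (1 : ℝ), g (β * y) * ((y ^ (-s - 1) : ℝ) : ℂ) := by
      ext β
      rw [eulerInverse, if_pos hpos]
    rw [h]
    exact (continuousOn_setIntegral_comp_mul_rpow measurableSet_Ioi (Ioi_subset_Ioi zero_le_one)
      hgc hgM (integrableOn_Ioi_rpow_of_lt (by linarith) one_pos)).neg

theorem twistedEulerOp_phase_mul_eulerInverse (n : ℤ) (hs : s ≠ 0)
    (hgc : ContinuousOn g (Ici 0)) (hgM : ∀ t, 0 ≤ t → ‖g t‖ ≤ M) (hβ : 0 < β) :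
    DifferentiableAt ℝ (fun x : ℝ => Complex.exp (Complex.I * n * x) * eulerInverse s g x) β ∧
      twistedEulerOp n s (fun x : ℝ => Complex.exp (Complex.I * n * x) * eulerInverse s g x) β =
        Complex.exp (Complex.I * n * β) * g β := by
  have hloc : (fun x : ℝ => Complex.exp (Complex.I * n * x) * eulerInverse s g x) =ᶠ[𝓝 β]
      fun x : ℝ => Complex.exp (Complex.I * n * x) * ((x ^ s : ℝ) : ℂ) * eulerPrimitive s g x :=
    eventually_of_mem (Ioi_mem_nhds hβ) fun x hx => by
      simp only [eulerInverse_eq_rpow_mul_eulerPrimitive hx, mul_assoc]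
  obtain ⟨hd, hD⟩ :=
    twistedEulerOp_phase_rpow_mul (n := n) hβ (hasDerivAt_eulerPrimitive hs hgc hgM hβ)
  refine ⟨hloc.differentiableAt_iff.2 hd, ?_⟩
  have h : ((β ^ (s + 1) : ℝ) : ℂ) * ((β ^ (-s - 1) : ℝ) : ℂ) = 1 := by
    rw [← Complex.ofReal_mul, ← Real.rpow_add hβ]
    simp
  rw [twistedEulerOp_congr hloc, hD]
  linear_combination Complex.exp (Complex.I * n * β) * g β * h

end EulerInverse

/-- **Bounded right inverse of `D^{(n,s)}` on `C_b`.**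
For `s ≠ 0` and bounded continuous `f` on `[0,∞)` (with bound `M`), there is a bounded
continuous `u`, differentiable on `(0,∞)`, solving `β(u' - i n u) - s u = f` on `(0,∞)`;
it is unique among bounded continuous solutions, it is given by the explicit integral
formula, and it satisfies `‖u‖_{C_b} ≤ ‖f‖_{C_b}/|s|`. -/
theorem stmt10 (n : ℤ) (s : ℝ) (hs : s ≠ 0) (f : ℝ → ℂ)
    (hfc : ContinuousOn f (Set.Ici 0)) (M : ℝ)
    (hfb : ∀ β : ℝ, 0 ≤ β → ‖f β‖ ≤ M) :
    ∃ u : ℝ → ℂ,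
      ContinuousOn u (Set.Ici 0) ∧
      (∀ β : ℝ, 0 < β → DifferentiableAt ℝ u β) ∧
      (∀ β : ℝ, 0 < β →
        (β : ℂ) * (deriv u β - Complex.I * (n : ℂ) * u β) - (s : ℂ) * u β = f β) ∧
      (∀ β : ℝ, 0 ≤ β → ‖u β‖ ≤ M / |s|) ∧
      (∀ β : ℝ, 0 ≤ β → u β =
        if 0 < s then
          -(Complex.exp (Complex.I * (n : ℂ) * (β : ℂ)) *
            ∫ y in Set.Ioi (1 : ℝ),
              f (β * y) * Complex.exp (-(Complex.I * (n : ℂ) * ((β * y : ℝ) : ℂ))) *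
                ((y ^ (-s - 1) : ℝ) : ℂ))
        else
          Complex.exp (Complex.I * (n : ℂ) * (β : ℂ)) *
            ∫ y in (0 : ℝ)..1,
              f (β * y) * Complex.exp (-(Complex.I * (n : ℂ) * ((β * y : ℝ) : ℂ))) *
                ((y ^ (-s - 1) : ℝ) : ℂ)) ∧
      (∀ v : ℝ → ℂ, ContinuousOn v (Set.Ici 0) →
        (∃ M' : ℝ, ∀ β : ℝ, 0 ≤ β → ‖v β‖ ≤ M') →
        (∀ β : ℝ, 0 < β → DifferentiableAt ℝ v β) →
        (∀ β : ℝ, 0 < β →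
          (β : ℂ) * (deriv v β - Complex.I * (n : ℂ) * v β) - (s : ℂ) * v β = f β) →
        Set.EqOn v u (Set.Ici 0)) := by
  set g : ℝ → ℂ := fun t => f t * Complex.exp (-(Complex.I * n * t))
  have hgc : ContinuousOn g (Ici 0) := hfc.mul (by fun_prop)
  have hgM : ∀ t, 0 ≤ t → ‖g t‖ ≤ M := fun t ht => by
    simpa [g, Complex.norm_exp] using hfb t ht
  set u : ℝ → ℂ := fun β => Complex.exp (Complex.I * n * β) * eulerInverse s g β
  have hu : ∀ β > 0, DifferentiableAt ℝ u β ∧ twistedEulerOp n s u β = f β := fun β hβ => by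
    obtain ⟨hd, hD⟩ := twistedEulerOp_phase_mul_eulerInverse n hs hgc hgM hβ
    refine ⟨hd, hD.trans ?_⟩
    rw [mul_left_comm, mul_assoc, ← Complex.exp_add, add_neg_cancel, Complex.exp_zero, mul_one]
  have huc : ContinuousOn u (Ici 0) :=
    (by fun_prop : Continuous fun β : ℝ => Complex.exp (Complex.I * n * β)).continuousOn.mul
      (continuousOn_eulerInverse hs hgc hgM)
  have hub : ∀ β, 0 ≤ β → ‖u β‖ ≤ M / |s| := fun β hβ => by
    simpa [u, Complex.norm_exp] using norm_eulerInverse_le hs hgM hβ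
  refine ⟨u, huc, fun β hβ => (hu β hβ).1, fun β hβ => (hu β hβ).2, hub, fun β _ => ?_,
    fun v hvc ⟨M', hvb⟩ hvd hv => eqOn_of_twistedEulerOp_eq hs hvc huc hvb hub hvd
      (fun β hβ => (hu β hβ).1) fun β hβ => (hv β hβ).trans (hu β hβ).2.symm⟩
  simp only [u, eulerInverse]
  split_ifs
  exacts [mul_neg _ _, rfl]
end
end

section
/- Weighted bound for the inverse of D^{(n,s)}: let δ > 0, n ∈ ℤ, s ∈ ℝ with |s| > δ, and let f ∈ C_b^δ. Then the unique bounded continuous solution u of D^{(n,s)}u = f on (0,∞) belongs to C_b^δ and satisfies ‖u‖_{C_b^δ} ≤ ‖f‖_{C_b^δ}/(|s| − δ). -/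
/-!
Multiplying by the integrating factor `t^{-s} e^{-int}` turns `D^{(n,s)} u = f` into
`(t^{-s} e^{-int} u)' = t^{-s-1} e^{-int} f`. If `t^e |f t| ≤ M`, the right-hand side is at most
`M t^{-s-e-1}`. Since `u` is bounded, `t^{-s} e^{-int} u` vanishes at `0` when `s < 0` and at `∞`
when `s > 0`, and `|e| < |s|` makes `t^{-s-e-1}` integrable at that end. Integrating from there
gives `t^e |u t| ≤ M / |s + e| ≤ M / (|s| - |e|)`; then take `e = ±δ`.
-/

open Set Filter Topology

section FencingBounds

variable {E : Type*} [NormedAddCommGroup E] [NormedSpace ℝ E] {F F' : ℝ → E}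

theorem norm_sub_le_sub_of_norm_deriv_le_deriv {G G' : ℝ → ℝ} {a b : ℝ} (hab : a ≤ b)
    (hF : ∀ x ∈ Icc a b, HasDerivAt F (F' x) x) (hG : ∀ x ∈ Icc a b, HasDerivAt G (G' x) x)
    (bound : ∀ x ∈ Ico a b, ‖F' x‖ ≤ G' x) : ‖F b - F a‖ ≤ G b - G a :=
  image_norm_le_of_norm_deriv_right_le_deriv_boundary' (f := fun x => F x - F a)
    (B := fun x => G x - G a)
    (fun x hx => ((hF x hx).sub_const (F a)).continuousAt.continuousWithinAt)
    (fun x hx => ((hF x (Ico_subset_Icc_self hx)).sub_const (F a)).hasDerivWithinAt)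
    (by simp)
    (fun x hx => ((hG x hx).sub_const (G a)).continuousAt.continuousWithinAt)
    (fun x hx => ((hG x (Ico_subset_Icc_self hx)).sub_const (G a)).hasDerivWithinAt)
    bound ⟨hab, le_rfl⟩

theorem hasDerivAt_mul_rpow_div {M c t : ℝ} (hc : c ≠ 0) (ht : 0 < t) :
    HasDerivAt (fun t => M * t ^ c / c) (M * t ^ (c - 1)) t := by
  refine (((Real.hasDerivAt_rpow_const (p := c) (Or.inl ht.ne')).const_mul M).div_const c
    ).congr_deriv ?_
  field_simp

theorem tendsto_rpow_nhdsGT_zero {c : ℝ} (hc : 0 < c) :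
    Tendsto (fun t : ℝ => t ^ c) (𝓝[>] 0) (𝓝 0) := by
  simpa [Real.zero_rpow hc.ne'] using
    (Real.continuousAt_rpow_const 0 c (Or.inr hc.le)).tendsto.mono_left nhdsWithin_le_nhds

variable {M c : ℝ} (hF : ∀ t, 0 < t → HasDerivAt F (F' t) t)
  (bound : ∀ t, 0 < t → ‖F' t‖ ≤ M * t ^ (c - 1))
include hF bound

/-- Compare `F` with the primitive `G t = M t^c / c` of the bound on `F'`, on `[a, β]` with
`a → 0⁺`, where both `F` and `G` vanish. -/
theorem norm_le_of_tendsto_nhdsGT_zero (hc : 0 < c) (hF0 : Tendsto F (𝓝[>] 0) (𝓝 0))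
    {β : ℝ} (hβ : 0 < β) : ‖F β‖ ≤ M * β ^ c / c := by
  have hG0 : Tendsto (fun a : ℝ => M * a ^ c / c) (𝓝[>] 0) (𝓝 0) := by
    simpa using ((tendsto_rpow_nhdsGT_zero hc).const_mul M).div_const c
  have hlim := ((continuous_norm.tendsto 0).comp hF0).add
    ((tendsto_const_nhds (x := M * β ^ c / c)).sub hG0)
  simp only [norm_zero, sub_zero, zero_add] at hlim
  refine ge_of_tendsto hlim ?_
  filter_upwards [Ioo_mem_nhdsGT hβ] with a ha
  have hsub := norm_sub_le_sub_of_norm_deriv_le_deriv ha.2.le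
    (fun x hx => hF x (ha.1.trans_le hx.1))
    (fun x hx => hasDerivAt_mul_rpow_div hc.ne' (ha.1.trans_le hx.1))
    (fun x hx => bound x (ha.1.trans_le hx.1))
  calc ‖F β‖ ≤ ‖F a‖ + ‖F β - F a‖ := norm_le_insert' _ _
    _ ≤ _ := by simp only [Function.comp_apply]; linarith

theorem norm_le_of_tendsto_atTop (hc : c < 0) (hF0 : Tendsto F atTop (𝓝 0))
    {β : ℝ} (hβ : 0 < β) : ‖F β‖ ≤ M * β ^ c / -c := by
  have hG0 : Tendsto (fun b : ℝ => M * b ^ c / c) atTop (𝓝 0) := by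
    simpa using ((tendsto_rpow_neg_atTop (neg_pos.2 hc)).const_mul M).div_const c
  have hlim := ((continuous_norm.tendsto 0).comp hF0).add
    (hG0.sub (tendsto_const_nhds (x := M * β ^ c / c)))
  simp only [norm_zero, zero_sub, zero_add] at hlim
  rw [div_neg]
  refine ge_of_tendsto hlim ?_
  filter_upwards [eventually_ge_atTop β] with b hb
  have hsub := norm_sub_le_sub_of_norm_deriv_le_deriv hb
    (fun x hx => hF x (hβ.trans_le hx.1))
    (fun x hx => hasDerivAt_mul_rpow_div hc.ne (hβ.trans_le hx.1))
    (fun x hx => bound x (hβ.trans_le hx.1))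
  calc ‖F β‖ ≤ ‖F b‖ + ‖F b - F β‖ := by
        simpa [norm_sub_rev] using norm_le_insert' (F β) (F b)
    _ ≤ _ := by simp only [Function.comp_apply]; linarith

end FencingBounds

noncomputable def integratingFactor (s : ℝ) (n : ℤ) (t : ℝ) : ℂ :=
  ((t ^ (-s) : ℝ) : ℂ) * Complex.exp (-(Complex.I * n * t))

theorem norm_integratingFactor (s : ℝ) (n : ℤ) {t : ℝ} (ht : 0 ≤ t) :
    ‖integratingFactor s n t‖ = t ^ (-s) := by
  have hphase : -(Complex.I * n * t) = ((-(n * t) : ℝ) : ℂ) * Complex.I := by push_cast; ring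
  rw [integratingFactor, norm_mul, hphase, Complex.norm_exp_ofReal_mul_I, mul_one,
    Complex.norm_real, Real.norm_of_nonneg (Real.rpow_nonneg ht _)]

theorem hasDerivAt_integratingFactor_mul (s : ℝ) (n : ℤ) {u : ℝ → ℂ} {u' : ℂ} {t : ℝ}
    (hu : HasDerivAt u u' t) (ht : 0 < t) :
    HasDerivAt (fun t => integratingFactor s n t * u t)
      (integratingFactor (s + 1) n t * (t * (u' - Complex.I * n * u t) - s * u t)) t := by
  have hpow :
      HasDerivAt (fun t : ℝ => ((t ^ (-s) : ℝ) : ℂ)) ((-s * t ^ (-s - 1) : ℝ) : ℂ) t :=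
    (Real.hasDerivAt_rpow_const (Or.inl ht.ne')).ofReal_comp
  have hphase : HasDerivAt (fun t : ℝ => -(Complex.I * n * t)) (-(Complex.I * n)) t := by
    simpa using ((hasDerivAt_id t).ofReal_comp.const_mul (Complex.I * n)).fun_neg
  refine ((hpow.mul hphase.cexp).mul hu).congr_deriv ?_
  have hsplit : ((t ^ (-s) : ℝ) : ℂ) = ((t ^ (-(s + 1)) : ℝ) : ℂ) * t := by
    rw [show -s = -(s + 1) + 1 by ring, Real.rpow_add ht, Real.rpow_one]
    push_cast; ring
  simp only [integratingFactor, Pi.mul_apply, hsplit, show -(s + 1) = -s - 1 by ring]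
  push_cast
  ring

section WeightedBound

variable {n : ℤ} {s e M M' : ℝ} {u f : ℝ → ℂ}
  (hub : ∀ t, 0 < t → ‖u t‖ ≤ M')
  (hud : ∀ t, 0 < t → DifferentiableAt ℝ u t)
  (hode : ∀ t : ℝ, 0 < t → (t : ℂ) * (deriv u t - Complex.I * n * u t) - s * u t = f t)
  (hfb : ∀ t, 0 < t → t ^ e * ‖f t‖ ≤ M)
include hub hud hode hfb

theorem rpow_mul_norm_le_div_abs_add (he : |e| < |s|) {β : ℝ} (hβ : 0 < β) :
    β ^ e * ‖u β‖ ≤ M / |s + e| := by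
  set V : ℝ → ℂ := fun t => integratingFactor s n t * u t
  have hV : ∀ t, 0 < t → HasDerivAt V (integratingFactor (s + 1) n t * f t) t := fun t ht => by
    simpa only [hode t ht] using hasDerivAt_integratingFactor_mul s n (hud t ht).hasDerivAt ht
  have hV' :
      ∀ t, 0 < t → ‖integratingFactor (s + 1) n t * f t‖ ≤ M * t ^ (-s - e - 1) := by
    intro t ht
    rw [norm_mul, norm_integratingFactor _ _ ht.le]
    calc t ^ (-(s + 1)) * ‖f t‖ = t ^ (-(s + 1)) * t ^ (-e) * (t ^ e * ‖f t‖) := by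
          rw [Real.rpow_neg ht.le e]; field_simp
      _ ≤ t ^ (-(s + 1)) * t ^ (-e) * M := by gcongr; exact hfb t ht
      _ = M * t ^ (-s - e - 1) := by rw [← Real.rpow_add ht]; ring_nf
  have hVu : ∀ t, 0 < t → ‖V t‖ ≤ M' * t ^ (-s) := by
    intro t ht
    rw [norm_mul, norm_integratingFactor _ _ ht.le, mul_comm]
    gcongr
    exact hub t ht
  have hVβ : ‖V β‖ ≤ M * β ^ (-s - e) / |s + e| := by
    rcases lt_or_gt_of_ne (show s ≠ 0 by rintro rfl; simp only [abs_zero] at he; linarith [abs_nonneg e])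
      with hs | hs
    · rw [abs_of_neg hs] at he
      rw [abs_of_neg (by linarith [le_abs_self e] : s + e < 0), neg_add']
      refine norm_le_of_tendsto_nhdsGT_zero hV hV' (by linarith [le_abs_self e])
        (squeeze_zero_norm' (eventually_nhdsWithin_of_forall hVu) ?_) hβ
      simpa using (tendsto_rpow_nhdsGT_zero (neg_pos.2 hs)).const_mul M'
    · rw [abs_of_pos hs] at he
      rw [abs_of_pos (by linarith [neg_abs_le e] : 0 < s + e), show s + e = -(-s - e) by ring]
      refine norm_le_of_tendsto_atTop hV hV' (by linarith [neg_abs_le e])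
        (squeeze_zero_norm' (eventually_gt_atTop 0 |>.mono hVu) ?_) hβ
      simpa using (tendsto_rpow_neg_atTop hs).const_mul M'
  calc β ^ e * ‖u β‖ = β ^ (e + s) * ‖V β‖ := by
        rw [norm_mul, norm_integratingFactor _ _ hβ.le, ← mul_assoc, ← Real.rpow_add hβ]
        ring_nf
    _ ≤ β ^ (e + s) * (M * β ^ (-s - e) / |s + e|) := by gcongr
    _ = M / |s + e| := by
        rw [mul_div_assoc', mul_left_comm, ← Real.rpow_add hβ]
        ring_nf
        simp

theorem rpow_mul_norm_le_div_abs_sub_abs (he : |e| < |s|) {β : ℝ} (hβ : 0 < β) :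
    β ^ e * ‖u β‖ ≤ M / (|s| - |e|) := by
  have hM : 0 ≤ M := (norm_nonneg (f 1)).trans (by simpa using hfb 1 one_pos)
  calc β ^ e * ‖u β‖ ≤ M / |s + e| := rpow_mul_norm_le_div_abs_add hub hud hode hfb he hβ
    _ ≤ M / (|s| - |e|) :=
        div_le_div_of_nonneg_left hM (sub_pos.2 he) (abs_sub_abs_le_abs_add s e)

end WeightedBound

theorem stmt11_general (δ : ℝ) (hδ : 0 < δ) (n : ℤ) (s : ℝ) (hs : δ < |s|)
    (f : ℝ → ℂ) (M : ℝ)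
    (hfb : ∀ β : ℝ, 0 < β →
      β ^ δ * ‖f β‖ ≤ M ∧ β ^ (-δ) * ‖f β‖ ≤ M)
    (u : ℝ → ℂ)
    (hub : ∃ M' : ℝ, ∀ β : ℝ, 0 ≤ β → ‖u β‖ ≤ M')
    (hud : ∀ β : ℝ, 0 < β → DifferentiableAt ℝ u β)
    (hode : ∀ β : ℝ, 0 < β →
      (β : ℂ) * (deriv u β - Complex.I * (n : ℂ) * u β) - (s : ℂ) * u β = f β) :
    ∀ β : ℝ, 0 < β →
      β ^ δ * ‖u β‖ ≤ M / (|s| - δ) ∧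
      β ^ (-δ) * ‖u β‖ ≤ M / (|s| - δ) := by
  obtain ⟨M', hM'⟩ := hub
  have hu_bdd : ∀ t, 0 < t → ‖u t‖ ≤ M' := fun t ht => hM' t ht.le
  have habs : |δ| = δ := abs_of_pos hδ
  intro β hβ
  constructor
  · simpa only [habs] using rpow_mul_norm_le_div_abs_sub_abs hu_bdd hud hode
      (fun t ht => (hfb t ht).1) (by rwa [habs]) hβ
  · simpa only [abs_neg, habs] using rpow_mul_norm_le_div_abs_sub_abs hu_bdd hud hode
      (fun t ht => (hfb t ht).2) (by rwa [abs_neg, habs]) hβ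

/-- **Weighted bound for the inverse of `D^{(n,s)}`.**
Let `δ > 0`, `|s| > δ` and `f ∈ C_b^δ` with `‖f‖_{C_b^δ} ≤ M`. Then any bounded continuous
solution `u` of `D^{(n,s)} u = f` on `(0,∞)` (which is unique) belongs to `C_b^δ` with
`‖u‖_{C_b^δ} ≤ M/(|s| - δ)`. -/
theorem stmt11 (δ : ℝ) (hδ : 0 < δ) (n : ℤ) (s : ℝ) (hs : δ < |s|)
    (f : ℝ → ℂ) (M : ℝ)
    (hfc : ContinuousOn f (Set.Ici 0))
    (hfb : ∀ β : ℝ, 0 < β →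
      β ^ δ * ‖f β‖ ≤ M ∧ β ^ (-δ) * ‖f β‖ ≤ M)
    (u : ℝ → ℂ)
    (huc : ContinuousOn u (Set.Ici 0))
    (hub : ∃ M' : ℝ, ∀ β : ℝ, 0 ≤ β → ‖u β‖ ≤ M')
    (hud : ∀ β : ℝ, 0 < β → DifferentiableAt ℝ u β)
    (hode : ∀ β : ℝ, 0 < β →
      (β : ℂ) * (deriv u β - Complex.I * (n : ℂ) * u β) - (s : ℂ) * u β = f β) :
    ∀ β : ℝ, 0 < β →
      β ^ δ * ‖u β‖ ≤ M / (|s| - δ) ∧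
      β ^ (-δ) * ‖u β‖ ≤ M / (|s| - δ) :=
  stmt11_general δ hδ n s hs f M hfb u hub hud hode
end

section
/- Commutation of the inverse of D^{(n,s)} with power weights: let n ∈ ℤ and s, ℓ ∈ ℝ with s ≠ 0 and s − ℓ ≠ 0. Let f : (0,∞) → ℂ be continuous, and let u, v : [0,∞) → ℂ be bounded continuous functions, differentiable on (0,∞), satisfying (D^{(n,s−ℓ)}u)(β) = f(β) and (D^{(n,s)}v)(β) = β^ℓ·f(β) for all β > 0. Then there exists a constant c ∈ ℂ such that β^ℓ·u(β) − v(β) = c·β^s·e^{inβ} for all β > 0. Moreover, if s and s − ℓ have the same sign, then c = 0. -/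
/-!
`D^{(n,s)}` is the Euler operator `β d/dβ - s` conjugated by `e^{inβ}`: the derivative of
`w β^{-s} e^{-inβ}` is `β^{-s-1} e^{-inβ} D^{(n,s)} w`, so the kernel of `D^{(n,s)}` on `(0,∞)` is
spanned by `β^s e^{inβ}`. Since `D^{(n,s)}(β^ℓ u) = β^ℓ D^{(n,s-ℓ)} u`, the difference `β^ℓ u - v`
lies in that kernel. For bounded `u, v` the constant `c` then satisfies
`|c| ≤ M β^{ℓ-s} + M' β^{-s}`, whose right side tends to `0` at `∞` when `s, s - ℓ > 0` and at `0⁺`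
when `s, s - ℓ < 0`.
-/

open Filter Topology Complex

/-- The paper's `D^{(n,s)}`. -/
noncomputable def twistedEuler (n : ℤ) (s : ℝ) (f : ℝ → ℂ) (β : ℝ) : ℂ :=
  β * (deriv f β - I * n * f β) - s * f β

lemma twistedEuler_sub {n : ℤ} {s β : ℝ} {u v : ℝ → ℂ}
    (hu : DifferentiableAt ℝ u β) (hv : DifferentiableAt ℝ v β) :
    twistedEuler n s (fun x => u x - v x) β = twistedEuler n s u β - twistedEuler n s v β := by
  simp only [twistedEuler, deriv_fun_sub hu hv]
  ring

lemma twistedEuler_rpow_mul {n : ℤ} {s ℓ β : ℝ} {u : ℝ → ℂ} (hβ : 0 < β)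
    (hu : DifferentiableAt ℝ u β) :
    twistedEuler n s (fun x => ((x ^ ℓ : ℝ) : ℂ) * u x) β =
      ((β ^ ℓ : ℝ) : ℂ) * twistedEuler n (s - ℓ) u β := by
  have hpow : HasDerivAt (fun x : ℝ => ((x ^ ℓ : ℝ) : ℂ)) ((ℓ * β ^ (ℓ - 1) : ℝ) : ℂ) β :=
    (Real.hasDerivAt_rpow_const (Or.inl hβ.ne')).ofReal_comp
  have hβpow : ((β ^ (ℓ - 1) : ℝ) : ℂ) * β = ((β ^ ℓ : ℝ) : ℂ) := by
    rw [← ofReal_mul, Real.rpow_sub_one hβ.ne', div_mul_cancel₀ _ hβ.ne']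
  rw [twistedEuler, twistedEuler, (hpow.fun_mul hu.hasDerivAt).deriv]
  push_cast at hβpow ⊢
  linear_combination ℓ * u β * hβpow

lemma hasDerivAt_mul_rpow_neg_mul_exp {n : ℤ} {s β : ℝ} {w : ℝ → ℂ} (hβ : 0 < β)
    (hw : DifferentiableAt ℝ w β) :
    HasDerivAt (fun x : ℝ => w x * ((x ^ (-s) : ℝ) : ℂ) * exp (-(I * n * x)))
      (((β ^ (-s - 1) : ℝ) : ℂ) * exp (-(I * n * β)) * twistedEuler n s w β) β := by
  have hpow : HasDerivAt (fun x : ℝ => ((x ^ (-s) : ℝ) : ℂ)) ((-s * β ^ (-s - 1) : ℝ) : ℂ) β :=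
    (Real.hasDerivAt_rpow_const (Or.inl hβ.ne')).ofReal_comp
  have hexp : HasDerivAt (fun x : ℝ => exp (-(I * n * x))) (exp (-(I * n * β)) * -(I * n)) β := by
    simpa using ((ofRealCLM.hasDerivAt (x := β)).const_mul (I * n)).neg.cexp
  have hβpow : ((β ^ (-s - 1) : ℝ) : ℂ) * β = ((β ^ (-s) : ℝ) : ℂ) := by
    rw [← ofReal_mul, Real.rpow_sub_one hβ.ne', div_mul_cancel₀ _ hβ.ne']
  refine ((hw.hasDerivAt.fun_mul hpow).fun_mul hexp).congr_deriv ?_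
  rw [twistedEuler]
  push_cast at hβpow ⊢
  linear_combination -(deriv w β - I * n * w β) * exp (-(I * n * β)) * hβpow

lemma exists_eq_mul_rpow_mul_exp_of_twistedEuler_eq_zero {n : ℤ} {s : ℝ} {w : ℝ → ℂ}
    (hw : ∀ β, 0 < β → DifferentiableAt ℝ w β) (h : ∀ β, 0 < β → twistedEuler n s w β = 0) :
    ∃ c : ℂ, ∀ β : ℝ, 0 < β → w β = c * ((β ^ s : ℝ) : ℂ) * exp (I * n * β) := by
  have hderiv : ∀ β, 0 < β →
      HasDerivAt (fun x : ℝ => w x * ((x ^ (-s) : ℝ) : ℂ) * exp (-(I * n * x))) 0 β :=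
    fun β hβ => by
      simpa [h β hβ] using hasDerivAt_mul_rpow_neg_mul_exp (n := n) (s := s) hβ (hw β hβ)
  obtain ⟨c, hc⟩ := isOpen_Ioi.exists_is_const_of_deriv_eq_zero isPreconnected_Ioi
    (fun β hβ => (hderiv β hβ).differentiableAt.differentiableWithinAt)
    (fun β hβ => (hderiv β hβ).deriv)
  refine ⟨c, fun β hβ => ?_⟩
  have hpow : ((β ^ (-s) : ℝ) : ℂ) * ((β ^ s : ℝ) : ℂ) = 1 := by
    rw [← ofReal_mul, ← Real.rpow_add hβ, neg_add_cancel, Real.rpow_zero, ofReal_one]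
  have hexp : exp (-(I * n * β)) * exp (I * n * β) = 1 := by
    rw [← exp_add, neg_add_cancel, exp_zero]
  rw [← hc β hβ]
  linear_combination (-w β * exp (-(I * n * β)) * exp (I * n * β)) * hpow - w β * hexp

lemma tendsto_rpow_nhdsGT_zero_s14 {p : ℝ} (hp : 0 < p) :
    Tendsto (fun β : ℝ => β ^ p) (𝓝[>] 0) (𝓝 0) := by
  simpa [Real.zero_rpow hp.ne'] using
    (Real.continuousAt_rpow_const 0 p (Or.inr hp.le)).tendsto.mono_left nhdsWithin_le_nhds

lemma nonpos_of_forall_le_mul_rpow_add_mul_rpow {x a b p q : ℝ} (hpq : 0 < p * q)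
    (h : ∀ β : ℝ, 0 < β → x ≤ a * β ^ p + b * β ^ q) : x ≤ 0 := by
  have of_tendsto : ∀ (l : Filter ℝ) [l.NeBot], (∀ᶠ β in l, 0 < β) →
      Tendsto (fun β : ℝ => β ^ p) l (𝓝 0) → Tendsto (fun β : ℝ => β ^ q) l (𝓝 0) → x ≤ 0 := by
    intro l _ hl hp hq
    refine ge_of_tendsto (by simpa using (hp.const_mul a).add (hq.const_mul b)) ?_
    filter_upwards [hl] with β hβ using h β hβ
  rcases mul_pos_iff.mp hpq with ⟨hp, hq⟩ | ⟨hp, hq⟩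
  · exact of_tendsto (𝓝[>] 0) self_mem_nhdsWithin (tendsto_rpow_nhdsGT_zero_s14 hp)
      (tendsto_rpow_nhdsGT_zero_s14 hq)
  · exact of_tendsto atTop (eventually_gt_atTop 0)
      (by simpa using tendsto_rpow_neg_atTop (neg_pos.mpr hp))
      (by simpa using tendsto_rpow_neg_atTop (neg_pos.mpr hq))

lemma eq_zero_of_rpow_mul_sub_eq_mul_rpow_mul_exp {n : ℤ} {s ℓ M M' : ℝ} {u v : ℝ → ℂ} {c : ℂ}
    (hsign : 0 < s * (s - ℓ)) (hu : ∀ β : ℝ, 0 < β → ‖u β‖ ≤ M)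
    (hv : ∀ β : ℝ, 0 < β → ‖v β‖ ≤ M')
    (hc : ∀ β : ℝ, 0 < β →
      ((β ^ ℓ : ℝ) : ℂ) * u β - v β = c * ((β ^ s : ℝ) : ℂ) * exp (I * n * β)) :
    c = 0 := by
  have hbound : ∀ β : ℝ, 0 < β → ‖c‖ ≤ M * β ^ (ℓ - s) + M' * β ^ (-s) := by
    intro β hβ
    have hnorm : ‖c‖ * β ^ s = ‖((β ^ ℓ : ℝ) : ℂ) * u β - v β‖ := by
      rw [hc β hβ, norm_mul, norm_mul, norm_exp, norm_real, Real.norm_of_nonneg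
        (Real.rpow_nonneg hβ.le s)]
      simp
    have hdiff : ‖((β ^ ℓ : ℝ) : ℂ) * u β - v β‖ ≤ β ^ ℓ * M + M' := by
      refine (norm_sub_le _ _).trans (add_le_add ?_ (hv β hβ))
      rw [norm_mul, norm_real, Real.norm_of_nonneg (Real.rpow_nonneg hβ.le ℓ)]
      exact mul_le_mul_of_nonneg_left (hu β hβ) (Real.rpow_nonneg hβ.le ℓ)
    calc ‖c‖ = ‖c‖ * β ^ s * β ^ (-s) := by
          rw [mul_assoc, ← Real.rpow_add hβ, add_neg_cancel, Real.rpow_zero, mul_one]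
      _ ≤ (β ^ ℓ * M + M') * β ^ (-s) := by
          rw [hnorm]
          exact mul_le_mul_of_nonneg_right hdiff (Real.rpow_nonneg hβ.le _)
      _ = M * β ^ (ℓ - s) + M' * β ^ (-s) := by
          rw [sub_eq_add_neg, Real.rpow_add hβ]
          ring
  have hexponents : 0 < (ℓ - s) * -s := by linarith
  exact norm_le_zero_iff.mp (nonpos_of_forall_le_mul_rpow_add_mul_rpow hexponents hbound)

theorem stmt14_general (n : ℤ) (s ℓ : ℝ)
    (f : ℝ → ℂ)
    (u v : ℝ → ℂ)
    (hub : ∃ M : ℝ, ∀ β : ℝ, 0 ≤ β → ‖u β‖ ≤ M)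
    (hud : ∀ β : ℝ, 0 < β → DifferentiableAt ℝ u β)
    (hu : ∀ β : ℝ, 0 < β →
      (β : ℂ) * (deriv u β - Complex.I * (n : ℂ) * u β) - ((s - ℓ : ℝ) : ℂ) * u β = f β)
    (hvb : ∃ M : ℝ, ∀ β : ℝ, 0 ≤ β → ‖v β‖ ≤ M)
    (hvd : ∀ β : ℝ, 0 < β → DifferentiableAt ℝ v β)
    (hv : ∀ β : ℝ, 0 < β →
      (β : ℂ) * (deriv v β - Complex.I * (n : ℂ) * v β) - (s : ℂ) * v β =
        ((β ^ ℓ : ℝ) : ℂ) * f β) :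
    ∃ c : ℂ,
      (∀ β : ℝ, 0 < β →
        ((β ^ ℓ : ℝ) : ℂ) * u β - v β =
          c * ((β ^ s : ℝ) : ℂ) * Complex.exp (Complex.I * (n : ℂ) * (β : ℂ))) ∧
      (0 < s * (s - ℓ) → c = 0) := by
  set w : ℝ → ℂ := fun x => ((x ^ ℓ : ℝ) : ℂ) * u x - v x
  have hpowu : ∀ β : ℝ, 0 < β → DifferentiableAt ℝ (fun x : ℝ => ((x ^ ℓ : ℝ) : ℂ) * u x) β :=
    fun β hβ =>
      (Real.hasDerivAt_rpow_const (p := ℓ) (Or.inl hβ.ne')).ofReal_comp.differentiableAt.mul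
        (hud β hβ)
  have hkernel : ∀ β : ℝ, 0 < β → twistedEuler n s w β = 0 := fun β hβ => by
    rw [twistedEuler_sub (hpowu β hβ) (hvd β hβ), twistedEuler_rpow_mul hβ (hud β hβ)]
    exact sub_eq_zero.mpr ((congrArg _ (hu β hβ)).trans (hv β hβ).symm)
  obtain ⟨c, hc⟩ := exists_eq_mul_rpow_mul_exp_of_twistedEuler_eq_zero
    (fun β hβ => (hpowu β hβ).sub (hvd β hβ)) hkernel
  refine ⟨c, hc, fun hsign => ?_⟩
  obtain ⟨M, hM⟩ := hub
  obtain ⟨M', hM'⟩ := hvb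
  exact eq_zero_of_rpow_mul_sub_eq_mul_rpow_mul_exp hsign (fun β hβ => hM β hβ.le)
    (fun β hβ => hM' β hβ.le) hc

/-- **Commutation of the inverse of `D^{(n,s)}` with power weights.**
If `u` is a bounded continuous solution of `D^{(n,s−ℓ)} u = f` and `v` a bounded continuous
solution of `D^{(n,s)} v = β^ℓ f` on `(0,∞)` (with `s ≠ 0 ≠ s − ℓ`), then
`β^ℓ u(β) − v(β) = c β^s e^{inβ}` for some constant `c`, and `c = 0` whenever `s` and
`s − ℓ` have the same sign. -/
theorem stmt14 (n : ℤ) (s ℓ : ℝ) (hs : s ≠ 0) (hsl : s - ℓ ≠ 0)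
    (f : ℝ → ℂ) (hf : ContinuousOn f (Set.Ioi 0))
    (u v : ℝ → ℂ)
    (huc : ContinuousOn u (Set.Ici 0))
    (hub : ∃ M : ℝ, ∀ β : ℝ, 0 ≤ β → ‖u β‖ ≤ M)
    (hud : ∀ β : ℝ, 0 < β → DifferentiableAt ℝ u β)
    (hu : ∀ β : ℝ, 0 < β →
      (β : ℂ) * (deriv u β - Complex.I * (n : ℂ) * u β) - ((s - ℓ : ℝ) : ℂ) * u β = f β)
    (hvc : ContinuousOn v (Set.Ici 0))
    (hvb : ∃ M : ℝ, ∀ β : ℝ, 0 ≤ β → ‖v β‖ ≤ M)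
    (hvd : ∀ β : ℝ, 0 < β → DifferentiableAt ℝ v β)
    (hv : ∀ β : ℝ, 0 < β →
      (β : ℂ) * (deriv v β - Complex.I * (n : ℂ) * v β) - (s : ℂ) * v β =
        ((β ^ ℓ : ℝ) : ℂ) * f β) :
    ∃ c : ℂ,
      (∀ β : ℝ, 0 < β →
        ((β ^ ℓ : ℝ) : ℂ) * u β - v β =
          c * ((β ^ s : ℝ) : ℂ) * Complex.exp (Complex.I * (n : ℂ) * (β : ℂ))) ∧
      (0 < s * (s - ℓ) → c = 0) :=
  stmt14_general n s ℓ f u v hub hud hu hvb hvd hv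
end

section
/- The adapted coordinate map is a C¹-diffeomorphism: let μ > 0 and let a : (0,∞) × ℝ → ℝ be continuously differentiable with a(β, φ + 2π) = a(β, φ) for all (β,φ), ∂_φ a(β,φ) − ∂_β a(β,φ) > 0 for all (β,φ), and such that the function (β,φ) ↦ a(β,φ) + μ·log β is bounded on (0,∞) × ℝ. Define T(β,φ) = e^{a(β,φ)}(cos(β+φ), sin(β+φ)). Then: (i) T maps (0,∞) × ℝ onto ℝ²∖{0}; (ii) T(β₁,φ₁) = T(β₂,φ₂) implies β₁ = β₂ and φ₁ − φ₂ ∈ 2πℤ; (iii) the Jacobian determinant of T equals −e^{2a}·(∂_φa − ∂_βa) and is nonzero everywhere; consequently the induced map from (0,∞) × (ℝ/2πℤ) to ℝ²∖{0} is a bijective local C¹-diffeomorphism with C¹ inverse. -/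
/-!
Since `T = exp (a + i(β + φ))`, along each line `β + φ = c` the argument of `T` is fixed while
`log |T| = a(β, c - β)` has derivative `∂_β a - ∂_φ a < 0`, and the bound on `a + μ log β`
sends it to `+∞` as `β → 0` and to `-∞` as `β → ∞`. So every ray from the origin is hit by
exactly one line modulo `2π`, on which `T` hits every point exactly once. For the Jacobian,
`DT v = T · (Da v + i(v₁ + v₂))`, so the determinant of the columns `DT e₁, DT e₂` is
`|T|² · Im((∂_β a - i)(∂_φ a + i)) = -e^{2a} (∂_φ a - ∂_β a)`.
-/

open Set

open Complex in
noncomputable def adaptedCoords (f : ℝ × ℝ → ℝ) (p : ℝ × ℝ) : ℂ :=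
  (Real.exp (f p) : ℂ) * exp (((p.1 + p.2 : ℝ) : ℂ) * I)

namespace adaptedCoords

open Complex

variable (f : ℝ × ℝ → ℝ)

theorem eq_exp (p : ℝ × ℝ) : adaptedCoords f p = exp (f p + (p.1 + p.2 : ℝ) * I) := by
  rw [adaptedCoords, exp_add, ofReal_exp]

theorem normSq_eq (p : ℝ × ℝ) : normSq (adaptedCoords f p) = Real.exp (2 * f p) := by
  rw [normSq_eq_norm_sq, eq_exp, norm_exp, ← Real.exp_nat_mul]
  simp

theorem eq_iff {p q : ℝ × ℝ} :
    adaptedCoords f p = adaptedCoords f q ↔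
      f p = f q ∧ ∃ n : ℤ, p.1 + p.2 = q.1 + q.2 + n * (2 * Real.pi) := by
  rw [eq_exp, eq_exp, exp_eq_exp_iff_exists_int]
  simp only [Complex.ext_iff]
  simp

theorem hasFDerivAt {p : ℝ × ℝ} {f' : ℝ × ℝ →L[ℝ] ℝ} (hf : HasFDerivAt f f' p) :
    HasFDerivAt (adaptedCoords f) (adaptedCoords f p •
      (ofRealCLM.comp f' + (ContinuousLinearMap.fst ℝ ℝ ℝ +
        ContinuousLinearMap.snd ℝ ℝ ℝ).smulRight I)) p := by
  have hangle : HasFDerivAt (fun q : ℝ × ℝ => ((q.1 + q.2 : ℝ) : ℂ) * I)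
      ((ContinuousLinearMap.fst ℝ ℝ ℝ + ContinuousLinearMap.snd ℝ ℝ ℝ).smulRight I) p := by
    convert ((ContinuousLinearMap.fst ℝ ℝ ℝ + ContinuousLinearMap.snd ℝ ℝ ℝ).smulRight
      I).hasFDerivAt using 1
    ext q; simp
  rw [show adaptedCoords f = _ from funext (eq_exp f)]
  exact ((ofRealCLM.hasFDerivAt.comp p hf).add hangle).cexp

theorem fderiv_apply {p : ℝ × ℝ} (hf : DifferentiableAt ℝ f p) (v : ℝ × ℝ) :
    fderiv ℝ (adaptedCoords f) p v =
      adaptedCoords f p * (fderiv ℝ f p v + (v.1 + v.2 : ℝ) * I) := by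
  rw [(hasFDerivAt f hf.hasFDerivAt).fderiv]
  simp [mul_add]

theorem jacobian_eq {p : ℝ × ℝ} (hf : DifferentiableAt ℝ f p) :
    (fderiv ℝ (adaptedCoords f) p (1, 0)).re * (fderiv ℝ (adaptedCoords f) p (0, 1)).im -
        (fderiv ℝ (adaptedCoords f) p (1, 0)).im * (fderiv ℝ (adaptedCoords f) p (0, 1)).re =
      -Real.exp (2 * f p) * (fderiv ℝ f p (0, 1) - fderiv ℝ f p (1, 0)) := by
  simp only [fderiv_apply f hf, ← normSq_eq f p, normSq_apply, mul_re, mul_im, add_re, add_im,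
    ofReal_re, ofReal_im, I_re, I_im]
  ring

end adaptedCoords

theorem exists_pos_eq_of_abs_add_mul_log_le {g : ℝ → ℝ} (hg : ContinuousOn g (Ioi 0))
    {μ M : ℝ} (hμ : 0 < μ) (hM : ∀ β, 0 < β → |g β + μ * Real.log β| ≤ M) (y : ℝ) :
    ∃ β, 0 < β ∧ g β = y := by
  set β₀ := Real.exp (-(M + y) / μ)
  set β₁ := Real.exp ((M - y) / μ)
  have hβ₀ : y ≤ g β₀ := by
    have := (abs_le.mp (hM β₀ (Real.exp_pos _))).1
    rw [Real.log_exp, mul_div_cancel₀ _ hμ.ne'] at this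
    linarith
  have hβ₁ : g β₁ ≤ y := by
    have := (abs_le.mp (hM β₁ (Real.exp_pos _))).2
    rw [Real.log_exp, mul_div_cancel₀ _ hμ.ne'] at this
    linarith
  have hsub : uIcc β₀ β₁ ⊆ Ioi 0 := fun β hβ =>
    (lt_min (Real.exp_pos _) (Real.exp_pos _)).trans_le hβ.1
  obtain ⟨β, hβ, rfl⟩ := intermediate_value_uIcc (hg.mono hsub) (mem_uIcc.mpr (.inr ⟨hβ₁, hβ₀⟩))
  exact ⟨β, hsub hβ, rfl⟩

theorem strictAntiOn_comp_antidiagonal {f : ℝ × ℝ → ℝ}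
    (hf : ∀ β, 0 < β → ∀ φ, DifferentiableAt ℝ f (β, φ))
    (hmono : ∀ β, 0 < β → ∀ φ, 0 < fderiv ℝ f (β, φ) (0, 1) - fderiv ℝ f (β, φ) (1, 0))
    (c : ℝ) : StrictAntiOn (fun β => f (β, c - β)) (Ioi 0) := by
  have hderiv : ∀ β, 0 < β → HasDerivAt (fun β => f (β, c - β))
      (fderiv ℝ f (β, c - β) (1, 0) - fderiv ℝ f (β, c - β) (0, 1)) β := by
    intro β hβ
    have hline := (hasDerivAt_id β).prodMk ((hasDerivAt_id β).const_sub c)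
    rw [← map_sub, Prod.mk_sub_mk, sub_zero, zero_sub]
    exact (hf β hβ (c - β)).hasFDerivAt.comp_hasDerivAt β hline
  refine strictAntiOn_of_deriv_neg (convex_Ioi 0)
    (fun β hβ => (hderiv β hβ).continuousAt.continuousWithinAt) fun β hβ => ?_
  rw [interior_Ioi] at hβ
  rw [(hderiv β hβ).deriv]
  linarith [hmono β hβ (c - β)]

/-- **The adapted coordinate map is a C¹-diffeomorphism.**
Let `μ > 0` and `a : (0,∞) × ℝ → ℝ` be C¹, `2π`-periodic in `φ`, with
`∂_φ a − ∂_β a > 0` and `a(β,φ) + μ log β` bounded. Then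
`T(β,φ) = e^{a(β,φ)}(cos(β+φ), sin(β+φ))` is: (i) onto `ℝ²∖{0}`;
(ii) injective up to `φ ↦ φ + 2πℤ`; and (iii) has Jacobian determinant
`−e^{2a}(∂_φa − ∂_βa) ≠ 0` everywhere. -/
theorem stmt16 (μ : ℝ) (hμ : 0 < μ) (a : ℝ → ℝ → ℝ)
    (ha : ContDiffOn ℝ 1 (fun p : ℝ × ℝ => a p.1 p.2) (Set.Ioi 0 ×ˢ Set.univ))
    (hper : ∀ β φ : ℝ, a β (φ + 2 * Real.pi) = a β φ)
    (hmono : ∀ β : ℝ, 0 < β → ∀ φ : ℝ,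
      0 < fderiv ℝ (fun p : ℝ × ℝ => a p.1 p.2) (β, φ) (0, 1) -
          fderiv ℝ (fun p : ℝ × ℝ => a p.1 p.2) (β, φ) (1, 0))
    (hbd : ∃ M : ℝ, ∀ β : ℝ, 0 < β → ∀ φ : ℝ, |a β φ + μ * Real.log β| ≤ M) :
    let T : ℝ × ℝ → ℂ := fun p =>
      (Real.exp (a p.1 p.2) : ℂ) * Complex.exp (((p.1 + p.2 : ℝ) : ℂ) * Complex.I)
    (∀ z : ℂ, z ≠ 0 → ∃ β : ℝ, 0 < β ∧ ∃ φ : ℝ, T (β, φ) = z) ∧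
    (∀ β₁ β₂ φ₁ φ₂ : ℝ, 0 < β₁ → 0 < β₂ → T (β₁, φ₁) = T (β₂, φ₂) →
      β₁ = β₂ ∧ ∃ k : ℤ, φ₁ - φ₂ = 2 * Real.pi * k) ∧
    (∀ β : ℝ, 0 < β → ∀ φ : ℝ,
      (fderiv ℝ T (β, φ) (1, 0)).re * (fderiv ℝ T (β, φ) (0, 1)).im -
        (fderiv ℝ T (β, φ) (1, 0)).im * (fderiv ℝ T (β, φ) (0, 1)).re =
      -(Real.exp (2 * a β φ)) *
        (fderiv ℝ (fun p : ℝ × ℝ => a p.1 p.2) (β, φ) (0, 1) -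
          fderiv ℝ (fun p : ℝ × ℝ => a p.1 p.2) (β, φ) (1, 0)) ∧
      (fderiv ℝ T (β, φ) (1, 0)).re * (fderiv ℝ T (β, φ) (0, 1)).im -
        (fderiv ℝ T (β, φ) (1, 0)).im * (fderiv ℝ T (β, φ) (0, 1)).re ≠ 0) := by
  intro T
  set f : ℝ × ℝ → ℝ := fun p => a p.1 p.2
  have hT : T = adaptedCoords f := rfl
  have hf : ∀ β, 0 < β → ∀ φ, DifferentiableAt ℝ f (β, φ) := fun β hβ φ =>
    (ha.differentiableOn one_ne_zero).differentiableAt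
      ((isOpen_Ioi.prod isOpen_univ).mem_nhds ⟨hβ, mem_univ φ⟩)
  rw [hT]
  refine ⟨fun z hz => ?_, fun β₁ β₂ φ₁ φ₂ hβ₁ hβ₂ hTeq => ?_, fun β hβ φ => ?_⟩
  · obtain ⟨M, hM⟩ := hbd
    have hline : ContinuousOn (fun β => f (β, z.arg - β)) (Ioi 0) :=
      ha.continuousOn.comp (by fun_prop) fun β hβ => ⟨hβ, mem_univ _⟩
    obtain ⟨β, hβ, hβz⟩ := exists_pos_eq_of_abs_add_mul_log_le hline hμ
      (fun β hβ => hM β hβ _) (Real.log ‖z‖)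
    refine ⟨β, hβ, z.arg - β, ?_⟩
    rw [adaptedCoords, hβz, Real.exp_log (norm_pos_iff.mpr hz), add_sub_cancel]
    exact Complex.norm_mul_exp_arg_mul_I z
  · obtain ⟨hfeq, n, hn⟩ := (adaptedCoords.eq_iff f).mp hTeq
    have hshift : f (β₂, β₁ + φ₁ - β₂) = f (β₂, φ₂) := by
      rw [show β₁ + φ₁ - β₂ = φ₂ + n * (2 * Real.pi) by linarith]
      exact (show Function.Periodic (a β₂) (2 * Real.pi) from hper β₂).int_mul n φ₂
    have hβ : β₁ = β₂ := (strictAntiOn_comp_antidiagonal hf hmono (β₁ + φ₁)).injOn hβ₁ hβ₂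
      (by simp only [add_sub_cancel_left]; rw [hshift]; exact hfeq)
    subst hβ
    exact ⟨rfl, n, by linarith⟩
  · have hJ := adaptedCoords.jacobian_eq f (hf β hβ φ)
    exact ⟨hJ, hJ ▸ mul_ne_zero (neg_ne_zero.mpr (Real.exp_pos _).ne') (hmono β hβ φ).ne'⟩
end

section
/- Removal of the space-time singularity for the vorticity formulation: let μ > 1, A > 0, and set r = 1 + μ (so r > 2). Let u : ℝ² × [0,∞) → ℝ² be measurable with |u(x,t)| ≤ A·|x|^{1−1/μ} for all x ≠ 0 and t ≥ 0, and let w : ℝ² × [0,∞) → ℝ be measurable such that for every R > 0: sup_{t ≥ 0} ‖w(·,t)‖_{L^r(B(0,R))} < ∞ and ‖w(·,t) − w(·,0)‖_{L^r(B(0,R))} → 0 as t → 0⁺. Assume that for every s > 0 and every F ∈ C_c^∞((ℝ²∖{0}) × [0,∞); ℝ): ∫_{ℝ²} w(x,s)·F(x,s) dx + ∫_s^∞∫_{ℝ²} w·∂_tF + w·(u·∇F) dx dt = 0. Then for every f ∈ C_c^∞(ℝ² × [0,∞); ℝ): ∫_{ℝ²} w(x,0)·f(x,0) dx + ∫₀^∞∫_{ℝ²}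 w·∂_tf + w·(u·∇f) dx dt = 0. -/
/-!
Test the equation on `(ℝ² ∖ {0}) × [δ, ∞)` against `f χ_δ`, where `χ_δ x = 1 - b (x / δ)` removes
a ball of radius `~ δ` around the origin, and let `δ → 0⁺`. The initial term converges by the
`L^r` continuity of `w` at `t = 0`. In the flux term
`∂ₜ(f χ_δ) + u · ∇(f χ_δ) = χ_δ (∂ₜf + u · ∇f) + f u · ∇χ_δ`: the first part converges by
dominated convergence, while the commutator `f u · ∇χ_δ` lives on a ball of radius `~ δ`, where
`|u| ≲ δ^(1 - 1/μ)` and `|∇χ_δ| ≲ δ⁻¹`. Hölder's inequality against `‖w(t)‖_{L^r}` bounds its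
integral by `δ^(1 - 1/μ) δ⁻¹ δ^(2 (1 - 1/r)) = δ^((2μ + 1)(μ - 1) / (μ (μ + 1)))`, uniformly in `t`,
and this tends to `0` exactly because `μ > 1`.
-/

open Set MeasureTheory Filter
open scoped ENNReal

noncomputable section

open Metric Topology

section Holder

variable {α : Type*} [MeasurableSpace α] {ν : Measure α} {p : ℝ≥0∞} {s : Set α} {v G : α → ℝ}
  {C : ℝ}

lemma one_sub_one_div_toReal_nonneg (hp : 1 ≤ p) : 0 ≤ 1 - 1 / p.toReal := by
  rcases eq_or_ne p ∞ with rfl | hp_top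
  · simp
  have : 1 ≤ p.toReal := by simpa using ENNReal.toReal_mono hp_top hp
  linarith [div_le_one_of_le₀ this (zero_le_one.trans this)]

lemma eLpNorm_one_mul_le (hp : 1 ≤ p)
    (hv : AEStronglyMeasurable v (ν.restrict s)) (hGC : ∀ᵐ x ∂ν, |G x| ≤ C)
    (hGs : ∀ x ∉ s, G x = 0) :
    eLpNorm (fun x => v x * G x) 1 ν ≤
      ENNReal.ofReal C * (eLpNorm v p (ν.restrict s) * ν s ^ (1 - 1 / p.toReal)) := by
  have hsupp : Function.support (fun x => v x * G x) ⊆ s := fun x hx =>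
    by_contra fun hxs => hx (by simp [hGs x hxs])
  rw [← eLpNorm_restrict_eq_of_support_subset hsupp]
  calc eLpNorm (fun x => v x * G x) 1 (ν.restrict s)
      ≤ ENNReal.ofReal C * eLpNorm v 1 (ν.restrict s) := by
        refine eLpNorm_le_mul_eLpNorm_of_ae_le_mul ?_ 1
        filter_upwards [ae_restrict_of_ae hGC] with x hx
        rw [norm_mul, Real.norm_eq_abs, Real.norm_eq_abs, mul_comm]
        exact mul_le_mul_of_nonneg_right hx (abs_nonneg _)
    _ ≤ ENNReal.ofReal C * (eLpNorm v p (ν.restrict s) * ν s ^ (1 - 1 / p.toReal)) := by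
        gcongr
        simpa [Measure.restrict_apply_univ] using
          eLpNorm_le_eLpNorm_mul_rpow_measure_univ hp hv

lemma integrable_mul_of_abs_le (hp : 1 ≤ p) (hv : AEStronglyMeasurable v ν)
    (hG : AEStronglyMeasurable G ν) (hGC : ∀ᵐ x ∂ν, |G x| ≤ C) (hGs : ∀ x ∉ s, G x = 0)
    (hvp : eLpNorm v p (ν.restrict s) ≠ ∞) (hνs : ν s ≠ ∞) :
    Integrable (fun x => v x * G x) ν := by
  refine memLp_one_iff_integrable.mp ⟨hv.mul hG, ?_⟩
  refine (eLpNorm_one_mul_le hp hv.restrict hGC hGs).trans_lt ?_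
  have := one_sub_one_div_toReal_nonneg hp
  exact ENNReal.mul_lt_top ENNReal.ofReal_lt_top
    (ENNReal.mul_lt_top hvp.lt_top (ENNReal.rpow_lt_top_of_nonneg this hνs))

lemma abs_integral_mul_le (hp : 1 ≤ p) (hv : AEStronglyMeasurable v ν)
    (hC : 0 ≤ C) (hGC : ∀ᵐ x ∂ν, |G x| ≤ C) (hGs : ∀ x ∉ s, G x = 0) {N : ℝ≥0∞}
    (hvN : eLpNorm v p (ν.restrict s) ≤ N) (hN : N ≠ ∞) (hνs : ν s ≠ ∞) :
    |∫ x, v x * G x ∂ν| ≤ C * (N.toReal * (ν s).toReal ^ (1 - 1 / p.toReal)) := by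
  have he := one_sub_one_div_toReal_nonneg hp
  have hfin : ENNReal.ofReal C * (N * ν s ^ (1 - 1 / p.toReal)) ≠ ∞ :=
    ENNReal.mul_ne_top ENNReal.ofReal_ne_top
      (ENNReal.mul_ne_top hN (ENNReal.rpow_ne_top_of_nonneg he hνs))
  have h : ‖∫ x, v x * G x ∂ν‖ₑ ≤ ENNReal.ofReal C * (N * ν s ^ (1 - 1 / p.toReal)) :=
    calc ‖∫ x, v x * G x ∂ν‖ₑ ≤ eLpNorm (fun x => v x * G x) 1 ν :=
          by rw [eLpNorm_one_eq_lintegral_enorm]; exact enorm_integral_le_lintegral_enorm _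
      _ ≤ _ := eLpNorm_one_mul_le hp hv.restrict hGC hGs
      _ ≤ _ := by gcongr
  have := ENNReal.toReal_mono hfin h
  rwa [toReal_enorm, Real.norm_eq_abs, ENNReal.toReal_mul, ENNReal.toReal_mul,
    ENNReal.toReal_ofReal hC, ← ENNReal.toReal_rpow] at this

lemma tendsto_integral_mul_of_tendsto_eLpNorm {ι : Type*} {l : Filter ι}
    [l.IsCountablyGenerated] (hp : 1 ≤ p) (hs : MeasurableSet s) (hνs : ν s ≠ ∞)
    {v : ι → α → ℝ} {v₀ : α → ℝ} {g : ι → α → ℝ} {g₀ : α → ℝ}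
    (hv : ∀ i, AEStronglyMeasurable (v i) ν) (hv₀ : AEStronglyMeasurable v₀ ν)
    (hv₀p : eLpNorm v₀ p (ν.restrict s) ≠ ∞)
    (hvv₀ : Tendsto (fun i => eLpNorm (fun x => v i x - v₀ x) p (ν.restrict s)) l (𝓝 0))
    (hC : 0 ≤ C) (hg : ∀ i, AEStronglyMeasurable (g i) ν) (hgC : ∀ i, ∀ᵐ x ∂ν, |g i x| ≤ C)
    (hgs : ∀ i, ∀ x ∉ s, g i x = 0) (hgg₀ : ∀ᵐ x ∂ν, Tendsto (fun i => g i x) l (𝓝 (g₀ x))) :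
    Tendsto (fun i => ∫ x, v i x * g i x ∂ν) l (𝓝 (∫ x, v₀ x * g₀ x ∂ν)) := by
  have hvi : ∀ i, AEStronglyMeasurable (fun x => v i x - v₀ x) ν := fun i => (hv i).sub hv₀
  have hfin : ∀ᶠ i in l, eLpNorm (fun x => v i x - v₀ x) p (ν.restrict s) ≠ ∞ :=
    (hvv₀.eventually (gt_mem_nhds zero_lt_one)).mono fun i hi =>
      (hi.trans ENNReal.one_lt_top).ne
  have hsplit : ∀ᶠ i in l, ∫ x, (v i x - v₀ x) * g i x ∂ν + ∫ x, v₀ x * g i x ∂ν =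
      ∫ x, v i x * g i x ∂ν := by
    filter_upwards [hfin] with i hi
    rw [← integral_add (integrable_mul_of_abs_le hp (hvi i) (hg i) (hgC i) (hgs i) hi hνs)
      (integrable_mul_of_abs_le hp hv₀ (hg i) (hgC i) (hgs i) hv₀p hνs)]
    congr 1 with x
    ring
  have hdiff : Tendsto (fun i => ∫ x, (v i x - v₀ x) * g i x ∂ν) l (𝓝 0) := by
    have hbound := (((ENNReal.tendsto_toReal ENNReal.zero_ne_top).comp hvv₀).mul_const
      ((ν s).toReal ^ (1 - 1 / p.toReal))).const_mul C
    simp only [ENNReal.toReal_zero, zero_mul, mul_zero] at hbound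
    refine squeeze_zero_norm' ?_ hbound
    filter_upwards [hfin] with i hi
    exact abs_integral_mul_le hp (hvi i) hC (hgC i) (hgs i) le_rfl hi hνs
  have hdom : Tendsto (fun i => ∫ x, v₀ x * g i x ∂ν) l (𝓝 (∫ x, v₀ x * g₀ x ∂ν)) := by
    have : IsFiniteMeasure (ν.restrict s) := isFiniteMeasure_restrict.mpr hνs
    have hv₀int : IntegrableOn v₀ s ν := (MemLp.integrable hp ⟨hv₀.restrict, hv₀p.lt_top⟩)
    refine tendsto_integral_filter_of_dominated_convergence (s.indicator fun x => |v₀ x| * C)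
      (Eventually.of_forall fun i => hv₀.mul (hg i)) (Eventually.of_forall fun i => ?_)
      (IntegrableOn.integrable_indicator (hv₀int.abs.mul_const C) hs) ?_
    · filter_upwards [hgC i] with x hx
      by_cases hxs : x ∈ s
      · rw [indicator_of_mem hxs, norm_mul, Real.norm_eq_abs, Real.norm_eq_abs]
        exact mul_le_mul_of_nonneg_left hx (abs_nonneg _)
      · simp [hxs, hgs i x hxs]
    · filter_upwards [hgg₀] with x hx using hx.const_mul (v₀ x)
  simpa using (hdiff.add hdom).congr' hsplit

end Holder

lemma tendsto_setIntegral_Ioi_of_dominated {E : Type*} [NormedAddCommGroup E]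
    [NormedSpace ℝ E] {ι : Type*} {l : Filter ι} [l.IsCountablyGenerated] {ν : Measure ℝ}
    {a : ℝ} {σ : ι → ℝ} {F : ι → ℝ → E} {f : ℝ → E} (bound : ℝ → ℝ)
    (hσ : Tendsto σ l (𝓝 a)) (haσ : ∀ᶠ i in l, a ≤ σ i)
    (hF : ∀ᶠ i in l, AEStronglyMeasurable (F i) (ν.restrict (Ioi a)))
    (h_bound : ∀ᶠ i in l, ∀ᵐ t ∂ν.restrict (Ioi a), ‖F i t‖ ≤ bound t)
    (bound_integrable : IntegrableOn bound (Ioi a) ν)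
    (h_lim : ∀ᵐ t ∂ν.restrict (Ioi a), Tendsto (fun i => F i t) l (𝓝 (f t))) :
    Tendsto (fun i => ∫ t in Ioi (σ i), F i t ∂ν) l (𝓝 (∫ t in Ioi a, f t ∂ν)) := by
  have hind : ∀ᶠ i in l,
      ∫ t in Ioi a, (Ioi (σ i)).indicator (F i) t ∂ν = ∫ t in Ioi (σ i), F i t ∂ν := by
    filter_upwards [haσ] with i hi
    rw [setIntegral_indicator measurableSet_Ioi, Ioi_inter_Ioi, sup_eq_right.mpr hi]
  refine (tendsto_integral_filter_of_dominated_convergence bound ?_ ?_ bound_integrable ?_).congr'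
    hind
  · filter_upwards [hF] with i hi using hi.indicator measurableSet_Ioi
  · filter_upwards [h_bound] with i hi
    filter_upwards [hi] with t ht using (norm_indicator_le_norm_self _ _).trans ht
  · filter_upwards [h_lim, ae_restrict_mem measurableSet_Ioi] with t ht hat
    refine ht.congr' ?_
    filter_upwards [hσ.eventually (gt_mem_nhds hat)] with i hi
    rw [indicator_of_mem (mem_Ioi.mpr hi)]


section Cutoff

variable {E : Type*} [NormedAddCommGroup E] [NormedSpace ℝ E] [HasContDiffBump E]
  (b : ContDiffBump (0 : E)) {δ : ℝ} {x : E}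

def cutoff (δ : ℝ) (x : E) : ℝ := 1 - b (δ⁻¹ • x)

lemma contDiff_cutoff {n : ℕ∞} : ContDiff ℝ n (cutoff b δ) :=
  contDiff_const.sub (b.contDiff.comp (contDiff_const_smul δ⁻¹))

lemma abs_cutoff_le_one : |cutoff b δ x| ≤ 1 :=
  abs_le.mpr ⟨by simp only [cutoff]; linarith [b.le_one (x := δ⁻¹ • x)],
    by simp only [cutoff]; linarith [b.nonneg (x := δ⁻¹ • x)]⟩

lemma cutoff_eq_zero (hδ : 0 < δ) (hx : ‖x‖ ≤ b.rIn * δ) : cutoff b δ x = 0 := by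
  have : δ⁻¹ • x ∈ closedBall (0 : E) b.rIn := by
    rw [mem_closedBall_zero_iff, norm_smul, Real.norm_of_nonneg (inv_nonneg.mpr hδ.le),
      inv_mul_le_iff₀ hδ, mul_comm]
    exact hx
  simp [cutoff, b.one_of_mem_closedBall this]

lemma cutoff_eq_one (hδ : 0 < δ) (hx : b.rOut * δ ≤ ‖x‖) : cutoff b δ x = 1 := by
  have : δ⁻¹ • x ∉ Function.support b := by
    rw [b.support_eq, mem_ball_zero_iff, norm_smul, Real.norm_of_nonneg (inv_nonneg.mpr hδ.le),
      inv_mul_lt_iff₀ hδ, mul_comm, not_lt]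
    exact hx
  simp [cutoff, Function.notMem_support.mp this]

lemma tendsto_cutoff (hx : x ≠ 0) : Tendsto (fun δ => cutoff b δ x) (𝓝[>] 0) (𝓝 1) := by
  refine tendsto_const_nhds.congr' ?_
  have hδ : ∀ᶠ δ in 𝓝[>] (0 : ℝ), b.rOut * δ < ‖x‖ :=
    (((continuous_const_mul b.rOut).tendsto' 0 0 (mul_zero _)).eventually
      (gt_mem_nhds (norm_pos_iff.mpr hx))).filter_mono nhdsWithin_le_nhds
  filter_upwards [hδ, self_mem_nhdsWithin] with δ hδx hδ0
  exact (cutoff_eq_one b hδ0 hδx.le).symm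

lemma hasFDerivAt_cutoff :
    HasFDerivAt (cutoff b δ) (-(δ⁻¹ • fderiv ℝ b (δ⁻¹ • x))) x := by
  have h := ((b.contDiff (n := 1)).differentiable one_ne_zero (δ⁻¹ • x)).hasFDerivAt.comp x
    ((hasFDerivAt_id x).const_smul δ⁻¹)
  exact ((hasFDerivAt_const (1 : ℝ) x).sub h).congr_fderiv (by ext v; simp)

lemma norm_fderiv_cutoff_le (hδ : 0 < δ) {C : ℝ} (hC : ∀ y, ‖fderiv ℝ b y‖ ≤ C) :
    ‖fderiv ℝ (cutoff b δ) x‖ ≤ C / δ := by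
  rw [(hasFDerivAt_cutoff b).fderiv, norm_neg, norm_smul,
    Real.norm_of_nonneg (inv_nonneg.mpr hδ.le), inv_mul_eq_div]
  exact div_le_div_of_nonneg_right (hC _) hδ.le

lemma fderiv_cutoff_eq_zero (hδ : 0 < δ) (hx : b.rOut * δ < ‖x‖) :
    fderiv ℝ (cutoff b δ) x = 0 := by
  have : cutoff b δ =ᶠ[𝓝 x] fun _ => 1 := by
    filter_upwards [(isOpen_lt continuous_const continuous_norm).mem_nhds hx] with y hy
    exact cutoff_eq_one b hδ (le_of_lt hy)
  rw [this.fderiv_eq, fderiv_const_apply]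

lemma tsupport_mul_cutoff_subset {F : Type*} [TopologicalSpace F] (g : E × F → ℝ) (hδ : 0 < δ) :
    tsupport (fun q => g q * cutoff b δ q.1) ⊆ {q | q.1 ≠ 0} := by
  have hsupp : Function.support (fun q => g q * cutoff b δ q.1) ⊆ {q | b.rIn * δ ≤ ‖q.1‖} :=
    fun q hq => show b.rIn * δ ≤ ‖q.1‖ from
      not_lt.mp fun h => hq (by simp [cutoff_eq_zero b hδ h.le])
  refine (closure_minimal hsupp (isClosed_le continuous_const
    (continuous_norm.comp continuous_fst))).trans fun q hq h0 => ?_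
  simp only [mem_ofPred_eq, h0, norm_zero] at hq
  exact (mul_pos b.rIn_pos hδ).not_ge hq

end Cutoff

lemma dotR_grad2 (g : ℂ → ℝ) (x a : ℂ) : dotR a (grad2 g x) = fderiv ℝ g x a := by
  have ha : a = a.re • (1 : ℂ) + a.im • Complex.I := by apply Complex.ext <;> simp
  conv_rhs => rw [ha]
  simp only [dotR, grad2, map_add, map_smul, smul_eq_mul]

lemma fderiv_apply_zero_one_add_dotR_grad2 {F : ℂ × ℝ → ℝ} {x : ℂ} {t : ℝ}
    (hF : DifferentiableAt ℝ F (x, t)) (a : ℂ) :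
    fderiv ℝ F (x, t) (0, 1) + dotR a (grad2 (fun y => F (y, t)) x) =
      fderiv ℝ F (x, t) (a, 1) := by
  have h : HasFDerivAt (fun y => F (y, t)) ((fderiv ℝ F (x, t)).comp (.inl ℝ ℂ ℝ)) x :=
    hF.hasFDerivAt.comp x (hasFDerivAt_prodMk_left x t)
  rw [dotR_grad2, h.fderiv, ContinuousLinearMap.comp_apply, ContinuousLinearMap.inl_apply,
    ← map_add, Prod.mk_add_mk, zero_add, add_zero]

lemma fderiv_mul_comp_fst_apply {E F : Type*} [NormedAddCommGroup E] [NormedSpace ℝ E]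
    [NormedAddCommGroup F] [NormedSpace ℝ F] {g : E × F → ℝ} {χ : E → ℝ} {q : E × F}
    (hg : DifferentiableAt ℝ g q) (hχ : DifferentiableAt ℝ χ q.1) (v : E × F) :
    fderiv ℝ (fun q => g q * χ q.1) q v = χ q.1 * fderiv ℝ g q v + g q * fderiv ℝ χ q.1 v.1 := by
  have h : HasFDerivAt (fun q => g q * χ q.1)
      (g q • (fderiv ℝ χ q.1).comp (.fst ℝ E F) + χ q.1 • fderiv ℝ g q) q :=
    hg.hasFDerivAt.mul (hχ.hasFDerivAt.comp q hasFDerivAt_fst)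
  rw [h.fderiv]
  simp [add_comm]

section Transport

variable {u : ℂ → ℝ → ℂ} {w : ℂ → ℝ → ℝ} {F : ℂ × ℝ → ℝ} {t : ℝ}

/-- `∫ w (∂ₜF + u · ∇ₓF) dx` at time `t`, written as the derivative of `F` along `(u, 1)`. -/
def transportIntegral (u : ℂ → ℝ → ℂ) (w : ℂ → ℝ → ℝ) (F : ℂ × ℝ → ℝ) (t : ℝ) : ℝ :=
  ∫ x, w x t * fderiv ℝ F (x, t) (u x t, 1)

lemma integral_weak_eq_transportIntegral (hF : Differentiable ℝ F) (t : ℝ) :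
    (∫ x : ℂ, w x t * fderiv ℝ F (x, t) (0, 1) +
      w x t * dotR (u x t) (grad2 (fun y => F (y, t)) x)) = transportIntegral u w F t := by
  simp_rw [← mul_add, fderiv_apply_zero_one_add_dotR_grad2 (hF _)]
  rfl

lemma transportIntegral_eq_zero (ht : ∀ x, (x, t) ∉ tsupport F) :
    transportIntegral u w F t = 0 := by
  simp [transportIntegral, fderiv_of_notMem_tsupport ℝ (ht _)]

lemma measurable_fderiv_apply_transport (hu : Measurable fun q : ℂ × ℝ => u q.1 q.2)
    (hF : ContDiff ℝ 1 F) : Measurable fun q : ℂ × ℝ => fderiv ℝ F q (u q.1 q.2, 1) :=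
  ContinuousLinearMap.measurable_apply₂.comp
    ((hF.continuous_fderiv one_ne_zero).measurable.prodMk (hu.prodMk measurable_const))

lemma stronglyMeasurable_transportIntegral (hu : Measurable fun q : ℂ × ℝ => u q.1 q.2)
    (hw : Measurable fun q : ℂ × ℝ => w q.1 q.2) (hF : ContDiff ℝ 1 F) :
    StronglyMeasurable (transportIntegral u w F) :=
  ((hw.comp measurable_swap).mul ((measurable_fderiv_apply_transport hu hF).comp
    measurable_swap)).stronglyMeasurable.integral_prod_right'

end Transport

lemma tendsto_inv_mul_rpow_mul_volume_closedBall_rpow {α β ρ : ℝ}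
    (hρ : 0 ≤ ρ) (h : 1 < α + 2 * β) :
    Tendsto (fun δ => δ⁻¹ * (ρ * δ) ^ α * (volume (closedBall (0 : ℂ) (ρ * δ))).toReal ^ β)
      (𝓝[>] 0) (𝓝 0) := by
  set γ := α + 2 * β - 1
  have hγ : 0 < γ := by simp only [γ]; linarith
  have heq : ∀ δ : ℝ, 0 < δ →
      δ⁻¹ * (ρ * δ) ^ α * (volume (closedBall (0 : ℂ) (ρ * δ))).toReal ^ β =
        ρ ^ α * (ρ ^ 2 * Real.pi) ^ β * δ ^ γ := by
    intro δ hδ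
    have hvol : (volume (closedBall (0 : ℂ) (ρ * δ))).toReal = ρ ^ 2 * Real.pi * δ ^ (2 : ℝ) := by
      simp [ENNReal.toReal_ofReal (mul_nonneg hρ hδ.le)]
      ring
    rw [hvol, Real.mul_rpow hρ hδ.le, Real.mul_rpow (by positivity) (by positivity),
      ← Real.rpow_mul hδ.le, ← Real.rpow_neg_one, show γ = -1 + (α + 2 * β) by ring,
      Real.rpow_add hδ, Real.rpow_add hδ]
    ring
  have hlim : Tendsto (fun δ : ℝ => ρ ^ α * (ρ ^ 2 * Real.pi) ^ β * δ ^ γ) (𝓝[>] 0) (𝓝 0) := by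
    have := ((Real.continuousAt_rpow_const 0 γ (Or.inr hγ.le)).tendsto.const_mul
      (ρ ^ α * (ρ ^ 2 * Real.pi) ^ β)).mono_left (nhdsWithin_le_nhds (s := Ioi 0))
    rwa [Real.zero_rpow hγ.ne', mul_zero] at this
  exact hlim.congr' (eventually_nhdsWithin_of_forall fun δ hδ => (heq δ hδ).symm)

lemma one_lt_one_sub_one_div_add_two_mul {μ : ℝ} (hμ : 1 < μ) :
    1 < (1 - 1 / μ) + 2 * (1 - 1 / (1 + μ)) := by
  have h1 : 1 / μ < 1 := (div_lt_one (by linarith)).mpr hμ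
  have h2 : 1 / (1 + μ) < 1 / 2 := one_div_lt_one_div_of_lt two_pos (by linarith)
  linarith

lemma HasCompactSupport.exists_tsupport_subset_ball_prod_Iio {E β : Type*}
    [SeminormedAddGroup E] [Zero β] {f : E × ℝ → β} (hf : HasCompactSupport f) :
    ∃ R, 0 < R ∧ tsupport f ⊆ ball (0 : E) R ×ˢ Iio R := by
  obtain ⟨R, hR, h⟩ := hf.isBounded.subset_ball_lt 0 0
  refine ⟨R, hR, fun q hq => ?_⟩
  have hqR := mem_ball_zero_iff.mp (h hq)
  exact ⟨mem_ball_zero_iff.mpr ((norm_fst_le q).trans_lt hqR),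
    (le_abs_self q.2).trans_lt ((norm_snd_le q).trans_lt hqR)⟩

section Estimates

variable {p : ℝ≥0∞} {α A R Cf Cd Cb : ℝ} {M : ℝ≥0∞} {u : ℂ → ℝ → ℂ} {w : ℂ → ℝ → ℝ}
  {f : ℂ × ℝ → ℝ} {x : ℂ} {t δ : ℝ}

lemma fderiv_eq_zero_of_notMem_ball (hfR : tsupport f ⊆ ball (0 : ℂ) R ×ˢ Iio R)
    (hx : x ∉ ball (0 : ℂ) R) : fderiv ℝ f (x, t) = 0 :=
  fderiv_of_notMem_tsupport ℝ fun h => hx (hfR h).1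

lemma abs_cutoff_mul_fderiv_apply_transport_le (b : ContDiffBump (0 : ℂ)) (hα : 0 ≤ α)
    (hA : 0 ≤ A) (hR : 0 ≤ R) (hu : ∀ x : ℂ, x ≠ 0 → ∀ t : ℝ, 0 ≤ t → ‖u x t‖ ≤ A * ‖x‖ ^ α)
    (hCd : ∀ q, ‖fderiv ℝ f q‖ ≤ Cd) (hfR : tsupport f ⊆ ball (0 : ℂ) R ×ˢ Iio R)
    (hx : x ≠ 0) (ht : 0 ≤ t) :
    |cutoff b δ x * fderiv ℝ f (x, t) (u x t, 1)| ≤ Cd * (A * R ^ α + 1) := by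
  have hCd0 : 0 ≤ Cd := (norm_nonneg _).trans (hCd 0)
  have hAR : 0 ≤ A * R ^ α := mul_nonneg hA (Real.rpow_nonneg hR α)
  rw [abs_mul]
  refine (mul_le_of_le_one_left (abs_nonneg _) (abs_cutoff_le_one b)).trans ?_
  by_cases hxR : x ∈ ball (0 : ℂ) R
  · have hux : ‖u x t‖ ≤ A * R ^ α := (hu x hx t ht).trans
      (by gcongr; exact (mem_ball_zero_iff.mp hxR).le)
    calc |fderiv ℝ f (x, t) (u x t, 1)| ≤ ‖fderiv ℝ f (x, t)‖ * ‖((u x t, 1) : ℂ × ℝ)‖ :=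
          (fderiv ℝ f (x, t)).le_opNorm _
      _ ≤ Cd * (A * R ^ α + 1) := by
        rw [Prod.norm_mk, norm_one]
        gcongr
        · exact hCd _
        · exact max_le (by linarith) (by linarith)
  · rw [fderiv_eq_zero_of_notMem_ball hfR hxR]
    simpa using mul_nonneg hCd0 (by linarith)

lemma abs_mul_fderiv_cutoff_le (b : ContDiffBump (0 : ℂ)) (hδ : 0 < δ) (hα : 0 ≤ α)
    (hA : 0 ≤ A) (hu : ∀ x : ℂ, x ≠ 0 → ∀ t : ℝ, 0 ≤ t → ‖u x t‖ ≤ A * ‖x‖ ^ α)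
    (hCf : ∀ q, |f q| ≤ Cf) (hCb : ∀ y, ‖fderiv ℝ b y‖ ≤ Cb) (hx : x ≠ 0) (ht : 0 ≤ t) :
    |f (x, t) * fderiv ℝ (cutoff b δ) x (u x t)| ≤ Cf * (Cb / δ * (A * (b.rOut * δ) ^ α)) := by
  have hCf0 : 0 ≤ Cf := (abs_nonneg _).trans (hCf 0)
  have hCb0 : 0 ≤ Cb := (norm_nonneg _).trans (hCb 0)
  have hρδ : 0 < b.rOut * δ := mul_pos b.rOut_pos hδ
  by_cases hxρ : ‖x‖ ≤ b.rOut * δ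
  · rw [abs_mul]
    gcongr
    · exact hCf _
    calc |fderiv ℝ (cutoff b δ) x (u x t)| ≤ ‖fderiv ℝ (cutoff b δ) x‖ * ‖u x t‖ :=
          (fderiv ℝ (cutoff b δ) x).le_opNorm _
      _ ≤ Cb / δ * (A * (b.rOut * δ) ^ α) := by
        gcongr
        · exact norm_fderiv_cutoff_le b hδ hCb
        · exact (hu x hx t ht).trans (by gcongr)
  · rw [fderiv_cutoff_eq_zero b hδ (not_le.mp hxρ)]
    simp only [zero_apply, mul_zero, abs_zero]
    have := Real.rpow_nonneg hρδ.le α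
    positivity

lemma tendsto_integral_initial_mul_cutoff (hp : 1 ≤ p)
    (hw : Measurable fun q : ℂ × ℝ => w q.1 q.2)
    (hw₀ : eLpNorm (fun x => w x 0) p (volume.restrict (ball 0 R)) ≠ ∞)
    (hconv : Tendsto (fun t => eLpNorm (fun x => w x t - w x 0) p
      (volume.restrict (ball 0 R))) (𝓝[>] 0) (𝓝 0))
    (hf : Continuous f) (hCf : ∀ q, |f q| ≤ Cf) (hfR : tsupport f ⊆ ball (0 : ℂ) R ×ˢ Iio R)
    (b : ContDiffBump (0 : ℂ)) :
    Tendsto (fun δ => ∫ x, w x δ * (f (x, δ) * cutoff b δ x)) (𝓝[>] 0)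
      (𝓝 (∫ x, w x 0 * f (x, 0))) := by
  refine tendsto_integral_mul_of_tendsto_eLpNorm hp measurableSet_ball measure_ball_lt_top.ne
    (fun δ => (hw.comp measurable_prodMk_right).aestronglyMeasurable)
    (hw.comp measurable_prodMk_right).aestronglyMeasurable hw₀ hconv
    ((abs_nonneg _).trans (hCf 0))
    (fun δ => ((hf.comp (continuous_id.prodMk continuous_const)).mul
      (contDiff_cutoff b (n := 0)).continuous).aestronglyMeasurable)
    (fun δ => Eventually.of_forall fun x => ?_) (fun δ x hx => ?_) ?_
  · rw [abs_mul]
    exact (mul_le_of_le_one_right (abs_nonneg _) (abs_cutoff_le_one b)).trans (hCf _)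
  · rw [image_eq_zero_of_notMem_tsupport fun h => hx (hfR h).1, zero_mul]
  · filter_upwards [Measure.ae_ne volume 0] with x hx
    have hfx : Tendsto (fun δ => f (x, δ)) (𝓝[>] 0) (𝓝 (f (x, 0))) :=
      ((hf.comp (continuous_const.prodMk continuous_id)).tendsto 0).mono_left nhdsWithin_le_nhds
    simpa using hfx.mul (tendsto_cutoff b hx)

lemma tendsto_integral_mul_cutoff_mul_fderiv (hp : 1 ≤ p) (hα : 0 ≤ α) (hA : 0 ≤ A)
    (hR : 0 ≤ R) (hum : Measurable fun q : ℂ × ℝ => u q.1 q.2)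
    (hu : ∀ x : ℂ, x ≠ 0 → ∀ t : ℝ, 0 ≤ t → ‖u x t‖ ≤ A * ‖x‖ ^ α)
    (hw : Measurable fun q : ℂ × ℝ => w q.1 q.2)
    (hwt : eLpNorm (fun x => w x t) p (volume.restrict (ball 0 R)) ≠ ∞)
    (hf : ContDiff ℝ 1 f) (hCd : ∀ q, ‖fderiv ℝ f q‖ ≤ Cd)
    (hfR : tsupport f ⊆ ball (0 : ℂ) R ×ˢ Iio R) (b : ContDiffBump (0 : ℂ)) (ht : 0 ≤ t) :
    Tendsto (fun δ => ∫ x, w x t * (cutoff b δ x * fderiv ℝ f (x, t) (u x t, 1))) (𝓝[>] 0)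
      (𝓝 (transportIntegral u w f t)) := by
  have hG := (measurable_fderiv_apply_transport hum hf).comp (measurable_prodMk_right (y := t))
  refine tendsto_integral_mul_of_tendsto_eLpNorm (v := fun _ x => w x t) hp measurableSet_ball
    measure_ball_lt_top.ne (fun δ => (hw.comp measurable_prodMk_right).aestronglyMeasurable)
    (hw.comp measurable_prodMk_right).aestronglyMeasurable hwt (by simp)
    (C := Cd * (A * R ^ α + 1)) ?_
    (fun δ => ((contDiff_cutoff b (n := 0)).continuous.measurable.mul hG).aestronglyMeasurable)
    (fun δ => ?_) (fun δ x hx => ?_) ?_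
  · exact mul_nonneg ((norm_nonneg _).trans (hCd 0))
      (add_nonneg (mul_nonneg hA (Real.rpow_nonneg hR α)) zero_le_one)
  · filter_upwards [Measure.ae_ne volume 0] with x hx
    exact abs_cutoff_mul_fderiv_apply_transport_le b hα hA hR hu hCd hfR hx ht
  · rw [fderiv_eq_zero_of_notMem_ball hfR hx, zero_apply, mul_zero]
  · filter_upwards [Measure.ae_ne volume 0] with x hx
    simpa using (tendsto_cutoff b hx).mul_const (fderiv ℝ f (x, t) (u x t, 1))

lemma integrable_and_abs_integral_mul_cutoff_mul_fderiv_le (hp : 1 ≤ p) (hα : 0 ≤ α)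
    (hA : 0 ≤ A) (hR : 0 ≤ R) (hum : Measurable fun q : ℂ × ℝ => u q.1 q.2)
    (hu : ∀ x : ℂ, x ≠ 0 → ∀ t : ℝ, 0 ≤ t → ‖u x t‖ ≤ A * ‖x‖ ^ α)
    (hw : Measurable fun q : ℂ × ℝ => w q.1 q.2)
    (hwt : eLpNorm (fun x => w x t) p (volume.restrict (ball 0 R)) ≤ M) (hMtop : M ≠ ∞)
    (hf : ContDiff ℝ 1 f) (hCd : ∀ q, ‖fderiv ℝ f q‖ ≤ Cd)
    (hfR : tsupport f ⊆ ball (0 : ℂ) R ×ˢ Iio R) (b : ContDiffBump (0 : ℂ)) (ht : 0 ≤ t) :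
    Integrable (fun x => w x t * (cutoff b δ x * fderiv ℝ f (x, t) (u x t, 1))) ∧
      |∫ x, w x t * (cutoff b δ x * fderiv ℝ f (x, t) (u x t, 1))| ≤ Cd * (A * R ^ α + 1) *
        (M.toReal * (volume (ball (0 : ℂ) R)).toReal ^ (1 - 1 / p.toReal)) := by
  have hwm : AEStronglyMeasurable (fun x => w x t) volume :=
    (hw.comp measurable_prodMk_right).aestronglyMeasurable
  have hbound : ∀ᵐ x, |cutoff b δ x * fderiv ℝ f (x, t) (u x t, 1)| ≤ Cd * (A * R ^ α + 1) := by
    filter_upwards [Measure.ae_ne volume 0] with x hx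
    exact abs_cutoff_mul_fderiv_apply_transport_le b hα hA hR hu hCd hfR hx ht
  have hvanish : ∀ x ∉ ball (0 : ℂ) R, cutoff b δ x * fderiv ℝ f (x, t) (u x t, 1) = 0 :=
    fun x hx => by rw [fderiv_eq_zero_of_notMem_ball hfR hx, zero_apply, mul_zero]
  have hmeas : Measurable fun x => cutoff b δ x * fderiv ℝ f (x, t) (u x t, 1) :=
    (contDiff_cutoff b (n := 0)).continuous.measurable.mul
      ((measurable_fderiv_apply_transport hum hf).comp measurable_prodMk_right)
  have hK : 0 ≤ Cd * (A * R ^ α + 1) := mul_nonneg ((norm_nonneg _).trans (hCd 0))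
    (add_nonneg (mul_nonneg hA (Real.rpow_nonneg hR α)) zero_le_one)
  exact ⟨integrable_mul_of_abs_le hp hwm hmeas.aestronglyMeasurable hbound hvanish
      (ne_top_of_le_ne_top hMtop hwt) measure_ball_lt_top.ne,
    abs_integral_mul_le hp hwm hK hbound hvanish hwt hMtop measure_ball_lt_top.ne⟩

lemma eventually_integrable_and_abs_integral_mul_fderiv_cutoff_lt (hp : 1 ≤ p)
    (hαp : 1 < α + 2 * (1 - 1 / p.toReal)) (hα : 0 ≤ α) (hA : 0 ≤ A) (hR : 0 < R)
    (hum : Measurable fun q : ℂ × ℝ => u q.1 q.2)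
    (hu : ∀ x : ℂ, x ≠ 0 → ∀ t : ℝ, 0 ≤ t → ‖u x t‖ ≤ A * ‖x‖ ^ α)
    (hw : Measurable fun q : ℂ × ℝ => w q.1 q.2)
    (hM : ∀ t : ℝ, 0 ≤ t → eLpNorm (fun x => w x t) p (volume.restrict (ball 0 R)) ≤ M)
    (hMtop : M ≠ ∞) (hf : Continuous f) (hCf : ∀ q, |f q| ≤ Cf) (b : ContDiffBump (0 : ℂ))
    (hCb : ∀ y, ‖fderiv ℝ b y‖ ≤ Cb) {ε : ℝ} (hε : 0 < ε) :
    ∀ᶠ δ in 𝓝[>] 0, ∀ t, 0 ≤ t →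
      Integrable (fun x => w x t * (f (x, t) * fderiv ℝ (cutoff b δ) x (u x t))) ∧
      |∫ x, w x t * (f (x, t) * fderiv ℝ (cutoff b δ) x (u x t))| < ε := by
  set β := 1 - 1 / p.toReal
  set B : ℝ → ℝ := fun δ => Cf * (Cb / δ * (A * (b.rOut * δ) ^ α)) *
    (M.toReal * (volume (closedBall (0 : ℂ) (b.rOut * δ))).toReal ^ β)
  have hB : Tendsto B (𝓝[>] 0) (𝓝 0) := by
    have := (tendsto_inv_mul_rpow_mul_volume_closedBall_rpow b.rOut_pos.le hαp).const_mul
      (Cf * Cb * A * M.toReal)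
    rw [mul_zero] at this
    exact this.congr fun δ => by simp only [B, div_eq_mul_inv]; ring
  have hsmall : ∀ᶠ δ in 𝓝[>] (0 : ℝ), b.rOut * δ < R :=
    (((continuous_const_mul b.rOut).tendsto' 0 0 (mul_zero _)).eventually
      (gt_mem_nhds hR)).filter_mono nhdsWithin_le_nhds
  filter_upwards [hB.eventually (gt_mem_nhds hε), hsmall, self_mem_nhdsWithin]
    with δ hBδ hδR hδ t ht
  have hwt : AEStronglyMeasurable (fun x => w x t) volume :=
    (hw.comp measurable_prodMk_right).aestronglyMeasurable
  have hC : 0 ≤ Cf * (Cb / δ * (A * (b.rOut * δ) ^ α)) :=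
    mul_nonneg ((abs_nonneg _).trans (hCf 0)) (mul_nonneg
      (div_nonneg ((norm_nonneg _).trans (hCb 0)) (le_of_lt hδ))
      (mul_nonneg hA (Real.rpow_nonneg (mul_pos b.rOut_pos hδ).le α)))
  have hwM : eLpNorm (fun x => w x t) p (volume.restrict (closedBall 0 (b.rOut * δ))) ≤ M :=
    (eLpNorm_mono_measure _ (Measure.restrict_mono (closedBall_subset_ball hδR) le_rfl)).trans
      (hM t ht)
  have hbound : ∀ᵐ x, |f (x, t) * fderiv ℝ (cutoff b δ) x (u x t)| ≤
      Cf * (Cb / δ * (A * (b.rOut * δ) ^ α)) := by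
    filter_upwards [Measure.ae_ne volume 0] with x hx
    exact abs_mul_fderiv_cutoff_le b hδ hα hA hu hCf hCb hx ht
  have hvanish : ∀ x ∉ closedBall (0 : ℂ) (b.rOut * δ),
      f (x, t) * fderiv ℝ (cutoff b δ) x (u x t) = 0 := fun x hx => by
    rw [fderiv_cutoff_eq_zero b hδ (by simpa using hx), zero_apply, mul_zero]
  have hmeas : Measurable fun x => f (x, t) * fderiv ℝ (cutoff b δ) x (u x t) :=
    (hf.comp (continuous_id.prodMk continuous_const)).measurable.mul
      (ContinuousLinearMap.measurable_apply₂.comp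
        (((contDiff_cutoff b (n := 1)).continuous_fderiv one_ne_zero).measurable.prodMk
          (hum.comp measurable_prodMk_right)))
  exact ⟨integrable_mul_of_abs_le hp hwt hmeas.aestronglyMeasurable hbound hvanish
      (ne_top_of_le_ne_top hMtop hwM) measure_closedBall_lt_top.ne,
    (abs_integral_mul_le hp hwt hC hbound hvanish hwM hMtop
      measure_closedBall_lt_top.ne).trans_lt hBδ⟩

lemma transportIntegral_mul_cutoff (hf : Differentiable ℝ f) (b : ContDiffBump (0 : ℂ))
    (hP : Integrable fun x => w x t * (cutoff b δ x * fderiv ℝ f (x, t) (u x t, 1)))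
    (hQ : Integrable fun x => w x t * (f (x, t) * fderiv ℝ (cutoff b δ) x (u x t))) :
    transportIntegral u w (fun q => f q * cutoff b δ q.1) t =
      (∫ x, w x t * (cutoff b δ x * fderiv ℝ f (x, t) (u x t, 1))) +
        ∫ x, w x t * (f (x, t) * fderiv ℝ (cutoff b δ) x (u x t)) := by
  rw [← integral_add hP hQ, transportIntegral]
  congr 1 with x
  rw [fderiv_mul_comp_fst_apply (hf _) ((contDiff_cutoff b (n := 1)).differentiable one_ne_zero _),
    mul_add]

lemma tendsto_integral_transportIntegral_mul_cutoff (hp : 1 ≤ p)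
    (hαp : 1 < α + 2 * (1 - 1 / p.toReal)) (hα : 0 ≤ α) (hA : 0 ≤ A) (hR : 0 < R)
    (hum : Measurable fun q : ℂ × ℝ => u q.1 q.2)
    (hu : ∀ x : ℂ, x ≠ 0 → ∀ t : ℝ, 0 ≤ t → ‖u x t‖ ≤ A * ‖x‖ ^ α)
    (hw : Measurable fun q : ℂ × ℝ => w q.1 q.2)
    (hM : ∀ t : ℝ, 0 ≤ t → eLpNorm (fun x => w x t) p (volume.restrict (ball 0 R)) ≤ M)
    (hMtop : M ≠ ∞) (hf : ContDiff ℝ 1 f) (hCf : ∀ q, |f q| ≤ Cf)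
    (hCd : ∀ q, ‖fderiv ℝ f q‖ ≤ Cd) (hfR : tsupport f ⊆ ball (0 : ℂ) R ×ˢ Iio R)
    (b : ContDiffBump (0 : ℂ)) (hCb : ∀ y, ‖fderiv ℝ b y‖ ≤ Cb) :
    Tendsto (fun δ => ∫ t in Ioi δ, transportIntegral u w (fun q => f q * cutoff b δ q.1) t)
      (𝓝[>] 0) (𝓝 (∫ t in Ioi 0, transportIntegral u w f t)) := by
  have hP := fun δ t (ht : 0 ≤ t) => integrable_and_abs_integral_mul_cutoff_mul_fderiv_le
    (δ := δ) hp hα hA hR.le hum hu hw (hM t ht) hMtop hf hCd hfR b ht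
  have hQ := fun ε (hε : 0 < ε) => eventually_integrable_and_abs_integral_mul_fderiv_cutoff_lt
    hp hαp hα hA hR hum hu hw hM hMtop hf.continuous hCf b hCb hε
  have hsplit : ∀ᶠ δ in 𝓝[>] 0, ∀ t, 0 ≤ t →
      transportIntegral u w (fun q => f q * cutoff b δ q.1) t =
        (∫ x, w x t * (cutoff b δ x * fderiv ℝ f (x, t) (u x t, 1))) +
          ∫ x, w x t * (f (x, t) * fderiv ℝ (cutoff b δ) x (u x t)) := by
    filter_upwards [hQ 1 one_pos] with δ hδ t ht
    exact transportIntegral_mul_cutoff (hf.differentiable one_ne_zero) b (hP δ t ht).1 (hδ t ht).1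
  have hlate : ∀ δ t, R ≤ t → transportIntegral u w (fun q => f q * cutoff b δ q.1) t = 0 :=
    fun δ t ht => transportIntegral_eq_zero fun x hx =>
      not_lt.mpr ht (hfR (tsupport_mul_subset_left hx)).2
  refine tendsto_setIntegral_Ioi_of_dominated ((Iio R).indicator fun _ =>
    Cd * (A * R ^ α + 1) * (M.toReal * (volume (ball (0 : ℂ) R)).toReal ^ (1 - 1 / p.toReal)) + 1)
    (tendsto_id.mono_left nhdsWithin_le_nhds)
    (eventually_nhdsWithin_of_forall fun δ hδ => le_of_lt hδ)
    (Eventually.of_forall fun δ => (stronglyMeasurable_transportIntegral hum hw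
      (hf.mul ((contDiff_cutoff b).comp contDiff_fst))).aestronglyMeasurable) ?_ ?_ ?_
  · filter_upwards [hsplit, hQ 1 one_pos] with δ hδs hδQ
    filter_upwards [ae_restrict_mem measurableSet_Ioi] with t (ht : 0 < t)
    by_cases htR : t ∈ Iio R
    · rw [indicator_of_mem htR, hδs t ht.le, Real.norm_eq_abs]
      exact (abs_add_le _ _).trans (add_le_add (hP δ t ht.le).2 (hδQ t ht.le).2.le)
    · rw [hlate δ t (not_lt.mp htR), indicator_of_notMem htR, norm_zero]
  · rw [integrableOn_indicator_iff measurableSet_Iio, Iio_inter_Ioi]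
    exact integrableOn_const measure_Ioo_lt_top.ne
  · filter_upwards [ae_restrict_mem measurableSet_Ioi] with t (ht : 0 < t)
    have hPt := tendsto_integral_mul_cutoff_mul_fderiv hp hα hA hR.le hum hu hw
      (ne_top_of_le_ne_top hMtop (hM t ht.le)) hf hCd hfR b ht.le
    have hQt : Tendsto (fun δ => ∫ x, w x t * (f (x, t) * fderiv ℝ (cutoff b δ) x (u x t)))
        (𝓝[>] 0) (𝓝 0) := Metric.tendsto_nhds.mpr fun ε hε => by
      filter_upwards [hQ ε hε] with δ hδ
      simpa [Real.dist_eq] using (hδ t ht.le).2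
    simpa using (hPt.add hQt).congr' (hsplit.mono fun δ hδ => (hδ t ht.le).symm)

end Estimates

/-- **Removal of the space-time singularity for the vorticity formulation.**
Let `μ > 1`, `A > 0`, `r = 1 + μ > 2`. Let `u` be measurable with
`|u(x,t)| ≤ A|x|^{1−1/μ}`, and `w` measurable with locally (in space) uniformly (in time)
bounded `L^r`-norms and `w(·,t) → w(·,0)` in `L^r(B(0,R))` as `t → 0⁺`. If the weak
vorticity equation holds on `(ℝ²∖{0}) × [s,∞)` for every `s > 0` (against spatially
origin-avoiding test functions), then it holds on `ℝ² × [0,∞)` against every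
`f ∈ C_c^∞(ℝ² × [0,∞))`. -/
theorem stmt19 (μ : ℝ) (hμ : 1 < μ) (A : ℝ) (hA : 0 < A)
    (u : ℂ → ℝ → ℂ)
    (humeas : Measurable fun p : ℂ × ℝ => u p.1 p.2)
    (hubd : ∀ x : ℂ, x ≠ 0 → ∀ t : ℝ, 0 ≤ t →
      ‖u x t‖ ≤ A * ‖x‖ ^ (1 - 1 / μ))
    (w : ℂ → ℝ → ℝ)
    (hwmeas : Measurable fun p : ℂ × ℝ => w p.1 p.2)
    (hwbd : ∀ R : ℝ, 0 < R → ∃ M : ℝ≥0∞, M ≠ ⊤ ∧ ∀ t : ℝ, 0 ≤ t →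
      eLpNorm (fun x => w x t) (ENNReal.ofReal (1 + μ))
        (volume.restrict (Metric.ball (0 : ℂ) R)) ≤ M)
    (hwconv : ∀ R : ℝ, 0 < R →
      Tendsto (fun t : ℝ =>
          eLpNorm (fun x => w x t - w x 0) (ENNReal.ofReal (1 + μ))
            (volume.restrict (Metric.ball (0 : ℂ) R)))
        (nhdsWithin 0 (Set.Ioi 0)) (nhds 0))
    (hweak : ∀ s : ℝ, 0 < s → ∀ F : ℂ × ℝ → ℝ, ContDiff ℝ (⊤ : ℕ∞) F →
      HasCompactSupport F → tsupport F ⊆ {p : ℂ × ℝ | p.1 ≠ 0} →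
      (∫ x : ℂ, w x s * F (x, s)) +
        (∫ t in Set.Ioi s, ∫ x : ℂ,
          w x t * fderiv ℝ F (x, t) (0, 1) +
            w x t * dotR (u x t) (grad2 (fun y => F (y, t)) x)) = 0) :
    ∀ f : ℂ × ℝ → ℝ, ContDiff ℝ (⊤ : ℕ∞) f → HasCompactSupport f →
      (∫ x : ℂ, w x 0 * f (x, 0)) +
        (∫ t in Set.Ioi (0 : ℝ), ∫ x : ℂ,
          w x t * fderiv ℝ f (x, t) (0, 1) +
            w x t * dotR (u x t) (grad2 (fun y => f (y, t)) x)) = 0 := by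
  intro f hf hsupp
  have hp : 1 ≤ ENNReal.ofReal (1 + μ) := ENNReal.one_le_ofReal.mpr (by linarith)
  have hα : 0 ≤ 1 - 1 / μ := sub_nonneg.mpr ((div_le_one (by linarith)).mpr hμ.le)
  have hαp : 1 < (1 - 1 / μ) + 2 * (1 - 1 / (ENNReal.ofReal (1 + μ)).toReal) := by
    rw [ENNReal.toReal_ofReal (by linarith)]
    exact one_lt_one_sub_one_div_add_two_mul hμ
  have hf1 : ContDiff ℝ 1 f := hf.of_le (by exact_mod_cast le_top)
  obtain ⟨R, hR, hfR⟩ := hsupp.exists_tsupport_subset_ball_prod_Iio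
  obtain ⟨M, hMtop, hM⟩ := hwbd R hR
  obtain ⟨Cf, hCf⟩ := hsupp.exists_bound_of_continuous hf.continuous
  obtain ⟨Cd, hCd⟩ := (hsupp.fderiv (𝕜 := ℝ)).exists_bound_of_continuous
    (hf1.continuous_fderiv one_ne_zero)
  let b : ContDiffBump (0 : ℂ) := ⟨1, 2, one_pos, one_lt_two⟩
  obtain ⟨Cb, hCb⟩ := (b.hasCompactSupport.fderiv (𝕜 := ℝ)).exists_bound_of_continuous
    ((b.contDiff (n := 1)).continuous_fderiv one_ne_zero)
  simp only [integral_weak_eq_transportIntegral (hf1.differentiable one_ne_zero)]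
  refine tendsto_nhds_unique ((tendsto_integral_initial_mul_cutoff hp hwmeas
    (ne_top_of_le_ne_top hMtop (hM 0 le_rfl)) (hwconv R hR) hf.continuous hCf hfR b).add
    (tendsto_integral_transportIntegral_mul_cutoff hp hαp hα hA.le hR humeas hubd hwmeas hM hMtop
      hf1 hCf hCd hfR b hCb)) (tendsto_const_nhds.congr' ?_)
  filter_upwards [self_mem_nhdsWithin] with δ hδ
  have hF : ContDiff ℝ (⊤ : ℕ∞) fun q : ℂ × ℝ => f q * cutoff b δ q.1 :=
    hf.mul ((contDiff_cutoff b).comp contDiff_fst)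
  have := hweak δ hδ _ hF hsupp.mul_right (tsupport_mul_cutoff_subset b f hδ)
  simp only [integral_weak_eq_transportIntegral (hF.differentiable (by simp))] at this
  exact this.symm
end
end
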